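/- arXiv:2111.11663 — 5 statements merged into one kernel-verified Lean document; each statement's English description precedes it below -/
import Mathlib

section
/- For every z ∈ ℂ with z ≠ 0 and z ∉ {q^k : k ∈ ℤ} ∪ {−q^k : k ∈ ℤ}, the bilateral series h^α(z) = Σ_{k=−∞}^∞ 2 z q^{k(1+α)} / (z² − q^{2k}) converges absolutely, and h^α satisfies the q-difference equation h^α(qz) = q^α h^α(z) for all such z. -/
/-- The function `h^α(z) = Σ_{k=-∞}^∞ 2 z q^{k(1+α)} / (z² - q^{2k})`. -/
noncomputable def hAlpha (q α : ℝ) (z : ℂ) : ℂ :=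
  ∑' k : ℤ, 2 * z * ((q ^ ((k : ℝ) * (1 + α)) : ℝ) : ℂ) / (z ^ 2 - (q : ℂ) ^ (2 * k))

/-!
As `k → +∞` the `k`-th term behaves like `2 z⁻¹ q^{k(1+α)}`, a geometric sequence since `α > -1`.
Substituting `k ↦ -k` and `z ↦ z⁻¹` turns the terms of `h^α` into minus those of `h^{-α}`, so the
tail `k → -∞` is geometric as well since `α < 1`. The `q`-difference equation comes from the
identity `term_k(qz) = q^α term_{k-1}(z)` followed by the shift `k ↦ k - 1` of the summation index.
-/

open Filter Topology Asymptotics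

noncomputable def hAlphaTerm (q α : ℝ) (z : ℂ) (k : ℤ) : ℂ :=
  2 * z * ((q ^ ((k : ℝ) * (1 + α)) : ℝ) : ℂ) / (z ^ 2 - (q : ℂ) ^ (2 * k))

namespace hAlphaTerm

variable {q α : ℝ} {z : ℂ}

theorem apply_natCast (hq0 : 0 < q) (n : ℕ) :
    hAlphaTerm q α z n = ((q ^ (1 + α)) ^ n : ℝ) * (2 * z / (z ^ 2 - ((q : ℂ) ^ 2) ^ n)) := by
  have hexp : ((n : ℤ) : ℝ) * (1 + α) = (1 + α) * n := by push_cast; ring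
  rw [hAlphaTerm, hexp, Real.rpow_mul_natCast hq0.le,
    show 2 * (n : ℤ) = ((2 * n : ℕ) : ℤ) by push_cast; ring, zpow_natCast, pow_mul]
  ring

theorem summable_norm_natCast (hq0 : 0 < q) (hq1 : q < 1) (hα : -1 < α) (hz : z ≠ 0) :
    Summable fun n : ℕ => ‖hAlphaTerm q α z n‖ := by
  have hgeom : Summable fun n : ℕ => (q ^ (1 + α)) ^ n :=
    summable_geometric_of_lt_one (by positivity) (Real.rpow_lt_one hq0.le hq1 (by linarith))
  have hpow : Tendsto (fun n : ℕ => ((q : ℂ) ^ 2) ^ n) atTop (𝓝 0) := by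
    refine tendsto_pow_atTop_nhds_zero_of_norm_lt_one ?_
    rw [norm_pow, Complex.norm_real, Real.norm_of_nonneg hq0.le]
    nlinarith
  have hquot : Tendsto (fun n : ℕ => 2 * z / (z ^ 2 - ((q : ℂ) ^ 2) ^ n)) atTop
      (𝓝 (2 * z / z ^ 2)) := by
    have h := (tendsto_const_nhds (x := 2 * z)).div ((tendsto_const_nhds (x := z ^ 2)).sub hpow)
      (by simpa using hz)
    rwa [sub_zero] at h
  have hnorm : (fun n : ℕ => ‖hAlphaTerm q α z n‖) =
      fun n => (q ^ (1 + α)) ^ n * ‖2 * z / (z ^ 2 - ((q : ℂ) ^ 2) ^ n)‖ := by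
    funext n
    rw [apply_natCast hq0, norm_mul, Complex.norm_real, Real.norm_of_nonneg (by positivity)]
  rw [hnorm]
  refine summable_of_isBigO_nat hgeom ?_
  simpa using (isBigO_refl _ atTop).mul (hquot.norm.isBigO_one ℝ)

theorem apply_neg (hq0 : 0 < q) (hz : z ≠ 0) (k : ℤ) :
    hAlphaTerm q α z (-k) = -hAlphaTerm q (-α) z⁻¹ k := by
  have hQ : (q : ℂ) ^ (2 * k) ≠ 0 := zpow_ne_zero _ (by exact_mod_cast hq0.ne')
  have hrpow : q ^ (((-k : ℤ) : ℝ) * (1 + α)) = q ^ ((k : ℝ) * (1 + -α)) * (q ^ (2 * k))⁻¹ := by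
    rw [← Real.rpow_intCast, ← Real.rpow_neg hq0.le, ← Real.rpow_add hq0]
    push_cast
    ring_nf
  have hden : z⁻¹ ^ 2 - (q : ℂ) ^ (2 * k) =
      -(z⁻¹ ^ 2 * (q : ℂ) ^ (2 * k)) * (z ^ 2 - (q : ℂ) ^ (2 * -k)) := by
    rw [mul_neg, zpow_neg]
    field_simp
    ring
  rw [hAlphaTerm, hAlphaTerm, hden, div_mul_eq_div_div, ← neg_div, hrpow]
  congr 1
  push_cast
  field_simp

theorem ofReal_mul_eq (hq0 : 0 < q) (k : ℤ) :
    hAlphaTerm q α (q * z) k = (q ^ α : ℝ) * hAlphaTerm q α z (k - 1) := by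
  have hq : (q : ℂ) ≠ 0 := by exact_mod_cast hq0.ne'
  have hrpow :
      q * q ^ ((k : ℝ) * (1 + α)) = q ^ 2 * (q ^ α * q ^ (((k - 1 : ℤ) : ℝ) * (1 + α))) := by
    nth_rewrite 1 [← Real.rpow_one q]
    rw [← Real.rpow_two, ← Real.rpow_add hq0, ← Real.rpow_add hq0, ← Real.rpow_add hq0]
    congr 1
    push_cast
    ring
  have hnum : 2 * (q * z) * ((q ^ ((k : ℝ) * (1 + α)) : ℝ) : ℂ) =
      (q : ℂ) ^ 2 * ((q ^ α : ℝ) * (2 * z * ((q ^ (((k - 1 : ℤ) : ℝ) * (1 + α)) : ℝ) : ℂ))) := by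
    have hrpowC := congrArg (fun x : ℝ => (x : ℂ)) hrpow
    push_cast at hrpowC ⊢
    linear_combination 2 * z * hrpowC
  have hden :
      (q * z) ^ 2 - (q : ℂ) ^ (2 * k) = (q : ℂ) ^ 2 * (z ^ 2 - (q : ℂ) ^ (2 * (k - 1))) := by
    rw [show 2 * k = ((2 : ℕ) : ℤ) + 2 * (k - 1) by ring, zpow_add₀ hq, zpow_natCast]
    ring
  rw [hAlphaTerm, hnum, hden, mul_div_mul_left _ _ (pow_ne_zero 2 hq), mul_div_assoc, hAlphaTerm]

theorem summable_norm (hq0 : 0 < q) (hq1 : q < 1) (hα1 : -1 < α) (hα2 : α < 1) (hz : z ≠ 0) :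
    Summable fun k : ℤ => ‖hAlphaTerm q α z k‖ := by
  refine .of_nat_of_neg (summable_norm_natCast hq0 hq1 hα1 hz) ?_
  simpa only [apply_neg hq0 hz, norm_neg] using
    summable_norm_natCast (α := -α) hq0 hq1 (by linarith) (inv_ne_zero hz)

end hAlphaTerm

theorem hAlpha_ofReal_mul {q : ℝ} (hq0 : 0 < q) (α : ℝ) (z : ℂ) :
    hAlpha q α (q * z) = (q ^ α : ℝ) * hAlpha q α z := calc
  hAlpha q α (q * z) = ∑' k : ℤ, (q ^ α : ℝ) * hAlphaTerm q α z (k - 1) :=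
    tsum_congr (hAlphaTerm.ofReal_mul_eq hq0)
  _ = (q ^ α : ℝ) * ∑' k : ℤ, hAlphaTerm q α z k := by
    rw [tsum_mul_left]
    exact congrArg _ ((Equiv.subRight (1 : ℤ)).tsum_eq (hAlphaTerm q α z))

theorem statement5_general
    (q α : ℝ) (hq0 : 0 < q) (hq1 : q < 1) (hα1 : -1 < α) (hα2 : α < 1)
    (z : ℂ) (hz0 : z ≠ 0) :
    Summable (fun k : ℤ =>
      ‖2 * z * ((q ^ ((k : ℝ) * (1 + α)) : ℝ) : ℂ) / (z ^ 2 - (q : ℂ) ^ (2 * k))‖) ∧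
    hAlpha q α ((q : ℂ) * z) = ((q ^ α : ℝ) : ℂ) * hAlpha q α z :=
  ⟨hAlphaTerm.summable_norm hq0 hq1 hα1 hα2 hz0, hAlpha_ofReal_mul hq0 α z⟩

/-- absolute convergence of the bilateral series defining `h^α`
and the q-difference equation `h^α(qz) = q^α h^α(z)`. -/
theorem statement5
    (q α : ℝ) (hq0 : 0 < q) (hq1 : q < 1) (hα1 : -1 < α) (hα2 : α < 1)
    (z : ℂ) (hz0 : z ≠ 0) (hz : ∀ k : ℤ, z ≠ (q : ℂ) ^ k ∧ z ≠ -((q : ℂ) ^ k)) :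
    Summable (fun k : ℤ =>
      ‖2 * z * ((q ^ ((k : ℝ) * (1 + α)) : ℝ) : ℂ) / (z ^ 2 - (q : ℂ) ^ (2 * k))‖) ∧
    hAlpha q α ((q : ℂ) * z) = ((q ^ α : ℝ) : ℂ) * hAlpha q α z :=
  statement5_general q α hq0 hq1 hα1 hα2 z hz0
end

section
/- There exists a unique pair of entire functions u, v : ℂ → ℂ such that u is even, v is odd, u(0) = 1, and for all t ∈ ℂ: u(qt) = u(t) − t·v(t) and v(qt) = t q^{2−α} u(t) + (q^{−α} − t² q^{2−α}) v(t). (This is the entire power-series solution S_A = [u, v]^T of the q-difference system S_A(qt) = [[1, −t],[t q^{2−α}, q^{−α} − t² q^{2−α}]] S_A(t).) -/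
/-!
Write `u t = F (t²)` and `v t = t G (t²)`. The system becomes `F s - F (q² s) = s G s` and
`q G (q² s) - q^{-α} G s = q^{2-α} F (q² s)`, i.e. `(1 - q^{2n+2}) aₙ₊₁ = bₙ` and
`(q^{2n+1} - q^{-α}) bₙ = q^{2-α} q^{2n} aₙ` for the coefficients; since `α > -1` the second
factor never vanishes, and the ratios `aₙ₊₁ / aₙ`, `bₙ₊₁ / bₙ` are `O(q^{2n})`, so `F`, `G` are
entire.

The difference `(w, z)` of two solutions solves the system and vanishes at `0`. The matrix of the
system has determinant `q^{-α}`, so it can be inverted, which gives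
`‖w s‖ + ‖z s‖ ≤ max 1 q^α (1 + ‖s‖)² (‖w (q s)‖ + ‖z (q s)‖)`. Iterating `m` times and using
`w, z = O(s)` at `0` bounds `‖w t‖ + ‖z t‖` by a constant times `(max 1 q^α · q)^m`, and
`max 1 q^α · q < 1` because `α > -1`.
-/

open Filter Finset
open scoped Topology

theorem summable_norm_mul_pow_of_norm_succ_le {E : Type*} [SeminormedAddCommGroup E]
    {c : ℕ → E} {ε : ℕ → ℝ} (hε : Tendsto ε atTop (𝓝 0))
    (hc : ∀ n, ‖c (n + 1)‖ ≤ ε n * ‖c n‖) (r : ℝ) :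
    Summable fun n => ‖c n‖ * r ^ n := by
  refine summable_of_ratio_norm_eventually_le (r := 1 / 2) (by norm_num) ?_
  have hsmall : ∀ᶠ n in atTop, ε n * |r| < 1 / 2 := by
    have := hε.mul_const |r|
    rw [zero_mul] at this
    exact this.eventually_lt_const (by norm_num)
  filter_upwards [hsmall] with n hn
  simp only [norm_mul, norm_pow, Real.norm_eq_abs, abs_norm]
  calc ‖c (n + 1)‖ * |r| ^ (n + 1) ≤ ε n * ‖c n‖ * |r| ^ (n + 1) := by gcongr; exact hc n
    _ = (ε n * |r|) * (‖c n‖ * |r| ^ n) := by ring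
    _ ≤ 1 / 2 * (‖c n‖ * |r| ^ n) := by gcongr

theorem differentiable_tsum_mul_pow {𝕜 : Type*} [NontriviallyNormedField 𝕜] [CompleteSpace 𝕜]
    {c : ℕ → 𝕜} (hc : ∀ r : ℝ, Summable fun n => ‖c n‖ * r ^ n) :
    Differentiable 𝕜 fun x => ∑' n, c n * x ^ n := by
  have hrad : (FormalMultilinearSeries.ofScalars 𝕜 c).radius = ⊤ :=
    FormalMultilinearSeries.radius_eq_top_of_summable_norm _ fun r => by
      simpa only [FormalMultilinearSeries.ofScalars_norm] using hc r
  have hps := (FormalMultilinearSeries.ofScalars 𝕜 c).hasFPowerSeriesOnBall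
    (hrad ▸ ENNReal.zero_lt_top)
  intro x
  have := (hps.analyticAt_of_mem (y := x) (by simp [hrad])).differentiableAt
  rwa [← FormalMultilinearSeries.ofScalarsSum, FormalMultilinearSeries.ofScalarsSum_eq_tsum] at this

theorem summable_mul_pow_of_summable_norm {𝕜 : Type*} [NormedField 𝕜] [CompleteSpace 𝕜]
    {c : ℕ → 𝕜} (hc : ∀ r : ℝ, Summable fun n => ‖c n‖ * r ^ n) (x : 𝕜) :
    Summable fun n => c n * x ^ n :=
  .of_norm <| by simpa only [norm_mul, norm_pow] using hc ‖x‖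

theorem tendsto_mul_pow_two_mul_atTop_nhds_zero {q : ℝ} (hq0 : 0 ≤ q) (hq1 : q < 1) (C : ℝ) :
    Tendsto (fun n : ℕ => C * q ^ (2 * n)) atTop (𝓝 0) := by
  simpa only [pow_mul, mul_zero] using (tendsto_pow_atTop_nhds_zero_of_lt_one (by positivity)
    (pow_lt_one₀ hq0 hq1 two_ne_zero)).const_mul C

section Iteration

variable {E : Type*} [SeminormedAddCommGroup E] [NormedSpace ℝ E] {P : E → ℝ} {q Q : ℝ}

theorem le_exp_mul_pow_mul_comp_pow_smul (hq0 : 0 < q) (hq1 : q < 1) (hQ : 0 ≤ Q)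
    (hP : ∀ s, 0 ≤ P s) (hstep : ∀ s, P s ≤ Q * (1 + ‖s‖) ^ 2 * P (q • s)) (t : E) (m : ℕ) :
    P t ≤ Real.exp (2 * ‖t‖ / (1 - q)) * Q ^ m * P (q ^ m • t) := by
  have iterate : ∀ m : ℕ,
      P t ≤ Q ^ m * Real.exp (2 * ‖t‖ * ∑ k ∈ range m, q ^ k) * P (q ^ m • t) := by
    intro m
    induction m with
    | zero => simp
    | succ m ih =>
      have hsq : (1 + ‖q ^ m • t‖) ^ 2 ≤ Real.exp (2 * ‖t‖ * q ^ m) := by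
        rw [norm_smul, Real.norm_of_nonneg (by positivity),
          show 2 * ‖t‖ * q ^ m = q ^ m * ‖t‖ + q ^ m * ‖t‖ by ring, Real.exp_add, ← sq]
        have := Real.add_one_le_exp (q ^ m * ‖t‖)
        gcongr
        linarith
      have hstep' : P (q ^ m • t) ≤ Q * Real.exp (2 * ‖t‖ * q ^ m) * P (q ^ (m + 1) • t) := by
        rw [pow_succ', ← smul_smul]
        exact (hstep _).trans (by gcongr; exact hP _)
      calc P t ≤ Q ^ m * Real.exp (2 * ‖t‖ * ∑ k ∈ range m, q ^ k) * P (q ^ m • t) := ih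
        _ ≤ Q ^ m * Real.exp (2 * ‖t‖ * ∑ k ∈ range m, q ^ k) *
            (Q * Real.exp (2 * ‖t‖ * q ^ m) * P (q ^ (m + 1) • t)) := by gcongr
        _ = _ := by
          rw [sum_range_succ, pow_succ, mul_add, Real.exp_add]
          ring
  have hgeom : ∑ k ∈ range m, q ^ k ≤ 1 / (1 - q) := by
    rw [range_eq_Ico]
    simpa using geom_sum_Ico_le_of_lt_one (m := 0) (n := m) hq0.le hq1
  have hexp : Real.exp (2 * ‖t‖ * ∑ k ∈ range m, q ^ k) ≤ Real.exp (2 * ‖t‖ / (1 - q)) := by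
    have := mul_le_mul_of_nonneg_left hgeom (by positivity : 0 ≤ 2 * ‖t‖)
    rw [mul_one_div] at this
    exact Real.exp_le_exp.2 this
  refine (iterate m).trans ?_
  rw [mul_comm (Real.exp _)]
  gcongr
  exact hP _

theorem eq_zero_of_le_mul_comp_smul (hq0 : 0 < q) (hq1 : q < 1) (hQ : 0 ≤ Q) (hQq : Q * q < 1)
    (hP : ∀ s, 0 ≤ P s) (hstep : ∀ s, P s ≤ Q * (1 + ‖s‖) ^ 2 * P (q • s))
    (hloc : P =O[𝓝 0] fun s => ‖s‖) (t : E) : P t = 0 := by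
  set M := Real.exp (2 * ‖t‖ / (1 - q))
  obtain ⟨C, hC⟩ := hloc.bound
  have hsmall : ∀ᶠ m : ℕ in atTop, P (q ^ m • t) ≤ C * (q ^ m * ‖t‖) := by
    have hto : Tendsto (fun m : ℕ => q ^ m • t) atTop (𝓝 0) := by
      simpa using (tendsto_pow_atTop_nhds_zero_of_lt_one hq0.le hq1).smul_const t
    filter_upwards [hto.eventually hC] with m hm
    simpa [Real.norm_of_nonneg (hP _), norm_smul, abs_of_pos hq0] using hm
  have hlim : Tendsto (fun m : ℕ => M * C * ‖t‖ * (Q * q) ^ m) atTop (𝓝 0) := by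
    simpa using (tendsto_pow_atTop_nhds_zero_of_lt_one (by positivity) hQq).const_mul
      (M * C * ‖t‖)
  refine le_antisymm (ge_of_tendsto hlim ?_) (hP t)
  filter_upwards [hsmall] with m hm
  calc P t ≤ M * Q ^ m * P (q ^ m • t) := le_exp_mul_pow_mul_comp_pow_smul hq0 hq1 hQ hP hstep t m
    _ ≤ M * Q ^ m * (C * (q ^ m * ‖t‖)) := by gcongr
    _ = M * C * ‖t‖ * (Q * q) ^ m := by ring

end Iteration

theorem DifferentiableAt.isBigO_norm_add_norm {u v : ℂ → ℂ} (hu : DifferentiableAt ℂ u 0)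
    (hv : DifferentiableAt ℂ v 0) (hu0 : u 0 = 0) (hv0 : v 0 = 0) :
    (fun s => ‖u s‖ + ‖v s‖) =O[𝓝 0] fun s => ‖s‖ := by
  have hu' := hu.isBigO_sub
  have hv' := hv.isBigO_sub
  simp only [hu0, hv0, sub_zero] at hu' hv'
  exact hu'.norm_left.norm_right.add hv'.norm_left.norm_right

def IsQDiffSolution (q α : ℝ) (u v : ℂ → ℂ) : Prop :=
  ∀ t : ℂ,
    u ((q : ℂ) * t) = u t - t * v t ∧
    v ((q : ℂ) * t) =
      t * ((q ^ (2 - α) : ℝ) : ℂ) * u t +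
        (((q ^ (-α) : ℝ) : ℂ) - t ^ 2 * ((q ^ (2 - α) : ℝ) : ℂ)) * v t

namespace IsQDiffSolution

variable {q α : ℝ} {u v u' v' : ℂ → ℂ}

theorem sub (h : IsQDiffSolution q α u v) (h' : IsQDiffSolution q α u' v') :
    IsQDiffSolution q α (u - u') (v - v') := fun t => by
  obtain ⟨h1, h2⟩ := h t
  obtain ⟨h1', h2'⟩ := h' t
  simp only [Pi.sub_apply]
  constructor
  · linear_combination h1 - h1'
  · linear_combination h2 - h2'

theorem backward (hq : 0 < q) (h : IsQDiffSolution q α u v) (s : ℂ) :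
    v s = ((q ^ α : ℝ) : ℂ) * v (q * s) - q ^ 2 * s * u (q * s) ∧
    u s = (1 - q ^ 2 * s ^ 2) * u (q * s) + ((q ^ α : ℝ) : ℂ) * s * v (q * s) := by
  have hA : ((q ^ α : ℝ) : ℂ) * ((q ^ (-α) : ℝ) : ℂ) = 1 := by
    rw [Real.rpow_neg hq.le]
    exact_mod_cast mul_inv_cancel₀ (Real.rpow_pos_of_pos hq α).ne'
  have hB : ((q ^ α : ℝ) : ℂ) * ((q ^ (2 - α) : ℝ) : ℂ) = (q : ℂ) ^ 2 := by
    rw [← Complex.ofReal_mul, ← Real.rpow_add hq, add_sub_cancel, Real.rpow_two]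
    push_cast; rfl
  obtain ⟨h1, h2⟩ := h s
  have hv : v s = ((q ^ α : ℝ) : ℂ) * v (q * s) - q ^ 2 * s * u (q * s) := by
    linear_combination (-((q ^ α : ℝ) : ℂ)) * (h2 - s * ((q ^ (2 - α) : ℝ) : ℂ) * h1)
      - v s * hA - s * u (q * s) * hB
  exact ⟨hv, by linear_combination -h1 + s * hv⟩

theorem norm_le (hq0 : 0 < q) (hq1 : q < 1) (h : IsQDiffSolution q α u v) (s : ℂ) :
    ‖u s‖ + ‖v s‖ ≤ max 1 (q ^ α) * (1 + ‖s‖) ^ 2 * (‖u (q * s)‖ + ‖v (q * s)‖) := by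
  obtain ⟨hv, hu⟩ := h.backward hq0 s
  set U := ‖u (q * s)‖
  set V := ‖v (q * s)‖
  have hc : ‖((q ^ α : ℝ) : ℂ)‖ = q ^ α := by
    rw [Complex.norm_real, Real.norm_of_nonneg (by positivity)]
  have hq2 : ‖(q : ℂ) ^ 2‖ = q ^ 2 := by
    rw [norm_pow, Complex.norm_real, Real.norm_of_nonneg hq0.le]
  have hvle : ‖v s‖ ≤ q ^ α * V + q ^ 2 * ‖s‖ * U := by
    rw [hv]
    refine (norm_sub_le _ _).trans (le_of_eq ?_)
    rw [norm_mul, norm_mul, norm_mul, hc, hq2]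
  have hule : ‖u s‖ ≤ (1 + q ^ 2 * ‖s‖ ^ 2) * U + q ^ α * ‖s‖ * V := by
    rw [hu]
    refine (norm_add_le _ _).trans ?_
    rw [norm_mul, norm_mul, norm_mul, hc]
    gcongr
    refine (norm_sub_le _ _).trans (le_of_eq ?_)
    rw [norm_one, norm_mul, hq2, norm_pow]
  have hq2le : q ^ 2 ≤ 1 := pow_le_one₀ hq0.le hq1.le
  have hs := norm_nonneg s
  have hone : 1 ≤ max 1 (q ^ α) := le_max_left _ _
  have hcU : 1 + q ^ 2 * ‖s‖ ^ 2 + q ^ 2 * ‖s‖ ≤ max 1 (q ^ α) * (1 + ‖s‖) ^ 2 := by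
    nlinarith [mul_le_mul_of_nonneg_right hone (sq_nonneg (1 + ‖s‖))]
  have hcV : q ^ α * (1 + ‖s‖) ≤ max 1 (q ^ α) * (1 + ‖s‖) ^ 2 := by
    have h1s : (0 : ℝ) ≤ 1 + ‖s‖ := by positivity
    nlinarith [mul_le_mul_of_nonneg_right (le_max_right 1 (q ^ α)) h1s]
  calc ‖u s‖ + ‖v s‖
      ≤ (1 + q ^ 2 * ‖s‖ ^ 2 + q ^ 2 * ‖s‖) * U + q ^ α * (1 + ‖s‖) * V := by linarith
    _ ≤ max 1 (q ^ α) * (1 + ‖s‖) ^ 2 * U + max 1 (q ^ α) * (1 + ‖s‖) ^ 2 * V := by gcongr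
    _ = _ := by ring

theorem eq_zero (hq0 : 0 < q) (hq1 : q < 1) (hα : -1 < α) (h : IsQDiffSolution q α u v)
    (hu : DifferentiableAt ℂ u 0) (hv : DifferentiableAt ℂ v 0) (hu0 : u 0 = 0)
    (hv0 : v 0 = 0) (t : ℂ) : u t = 0 ∧ v t = 0 := by
  have hQq : max 1 (q ^ α) * q < 1 := by
    rw [max_mul_of_nonneg _ _ hq0.le, one_mul, ← Real.rpow_add_one hq0.ne']
    exact max_lt hq1 (Real.rpow_lt_one hq0.le hq1 (by linarith))
  have hP := eq_zero_of_le_mul_comp_smul (P := fun s => ‖u s‖ + ‖v s‖) hq0 hq1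
    (by positivity) hQq (fun s => by positivity)
    (fun s => by simpa only [Complex.real_smul] using h.norm_le hq0 hq1 s)
    (hu.isBigO_norm_add_norm hv hu0 hv0) t
  constructor <;> apply norm_eq_zero.mp <;> linarith [norm_nonneg (u t), norm_nonneg (v t)]

end IsQDiffSolution

-- `qSeriesA`, `qSeriesB` are `F`, `G` above, with coefficients `aₙ = qCoeffA q α n` and
-- `bₙ = qCoeffB q α n = qRatio q α n * aₙ`.
noncomputable def qRatio (q α : ℝ) (n : ℕ) : ℝ :=
  q ^ (2 - α) * q ^ (2 * n) / (q ^ (2 * n + 1) - q ^ (-α))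

noncomputable def qCoeffA (q α : ℝ) : ℕ → ℝ
  | 0 => 1
  | n + 1 => qRatio q α n * qCoeffA q α n / (1 - q ^ (2 * n + 2))

noncomputable def qCoeffB (q α : ℝ) (n : ℕ) : ℝ :=
  qRatio q α n * qCoeffA q α n

section Coefficients

variable {q α : ℝ}

theorem pow_two_mul_add_one_lt_rpow_neg (hq0 : 0 < q) (hq1 : q < 1) (hα : -1 < α) (n : ℕ) :
    q ^ (2 * n + 1) < q ^ (-α) := by
  rw [← Real.rpow_natCast]
  exact Real.rpow_lt_rpow_of_exponent_gt hq0 hq1 (by push_cast; linarith [n.cast_nonneg (α := ℝ)])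

theorem one_sub_pow_mul_qCoeffA_succ (hq0 : 0 < q) (hq1 : q < 1) (n : ℕ) :
    (1 - q ^ (2 * n + 2)) * qCoeffA q α (n + 1) = qCoeffB q α n := by
  have : 1 - q ^ (2 * n + 2) ≠ 0 := (sub_pos.2 (pow_lt_one₀ hq0.le hq1 (by omega))).ne'
  simp only [qCoeffA, qCoeffB]
  field_simp

theorem pow_sub_mul_qCoeffB (hq0 : 0 < q) (hq1 : q < 1) (hα : -1 < α) (n : ℕ) :
    (q ^ (2 * n + 1) - q ^ (-α)) * qCoeffB q α n = q ^ (2 - α) * q ^ (2 * n) * qCoeffA q α n := by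
  have := (sub_neg.2 (pow_two_mul_add_one_lt_rpow_neg hq0 hq1 hα n)).ne
  simp only [qCoeffB, qRatio]
  field_simp

theorem abs_qRatio_le (hq0 : 0 < q) (hq1 : q < 1) (hα : -1 < α) (n : ℕ) :
    |qRatio q α n| ≤ q ^ (2 - α) / (q ^ (-α) - q) * q ^ (2 * n) := by
  have hlt := pow_two_mul_add_one_lt_rpow_neg hq0 hq1 hα 0
  have hle : q ^ (2 * n + 1) ≤ q := pow_le_of_le_one hq0.le hq1.le (by omega)
  simp only [mul_zero, zero_add, pow_one] at hlt
  rw [qRatio, abs_div, abs_of_pos (by positivity), abs_of_neg (by linarith), neg_sub,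
    div_mul_eq_mul_div, mul_comm (q ^ (2 - α))]
  gcongr

theorem abs_qRatio_mul_div_le (hq0 : 0 < q) (hq1 : q < 1) (hα : -1 < α) {m n : ℕ}
    (hnm : n ≤ m) (x : ℝ) :
    |qRatio q α m * x / (1 - q ^ (2 * n + 2))| ≤
      q ^ (2 - α) / (q ^ (-α) - q) / (1 - q ^ 2) * q ^ (2 * n) * |x| := by
  have h2 : 1 - q ^ 2 ≤ 1 - q ^ (2 * n + 2) := by
    gcongr 1 - ?_
    exact pow_le_pow_of_le_one hq0.le hq1.le (by omega)
  have hpos : 0 < 1 - q ^ 2 := sub_pos.2 (pow_lt_one₀ hq0.le hq1 two_ne_zero)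
  have hρ : |qRatio q α m| ≤ q ^ (2 - α) / (q ^ (-α) - q) * q ^ (2 * n) :=
    (abs_qRatio_le hq0 hq1 hα m).trans <| by
      have hK : q < q ^ (-α) := by simpa using pow_two_mul_add_one_lt_rpow_neg hq0 hq1 hα 0
      have : 0 ≤ q ^ (2 - α) / (q ^ (-α) - q) := div_nonneg (by positivity) (by linarith)
      exact mul_le_mul_of_nonneg_left (pow_le_pow_of_le_one hq0.le hq1.le (by omega)) this
  rw [abs_div, abs_mul, abs_of_pos (a := 1 - q ^ (2 * n + 2)) (by linarith)]
  calc |qRatio q α m| * |x| / (1 - q ^ (2 * n + 2))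
      ≤ |qRatio q α m| * |x| / (1 - q ^ 2) := by gcongr
    _ ≤ q ^ (2 - α) / (q ^ (-α) - q) * q ^ (2 * n) * |x| / (1 - q ^ 2) := by gcongr
    _ = _ := by ring

end Coefficients

noncomputable def qSeriesA (q α : ℝ) (x : ℂ) : ℂ := ∑' n, (qCoeffA q α n : ℂ) * x ^ n

noncomputable def qSeriesB (q α : ℝ) (x : ℂ) : ℂ := ∑' n, (qCoeffB q α n : ℂ) * x ^ n

theorem qSeriesA_zero (q α : ℝ) : qSeriesA q α 0 = 1 := by
  rw [qSeriesA, tsum_eq_single 0 fun n hn => by simp [hn]]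
  simp [qCoeffA]

section Series

variable {q α : ℝ} (hq0 : 0 < q) (hq1 : q < 1) (hα : -1 < α)
include hq0 hq1 hα

theorem summable_norm_qCoeffA_mul_pow (r : ℝ) :
    Summable fun n => ‖(qCoeffA q α n : ℂ)‖ * r ^ n := by
  refine summable_norm_mul_pow_of_norm_succ_le (tendsto_mul_pow_two_mul_atTop_nhds_zero hq0.le hq1
    (q ^ (2 - α) / (q ^ (-α) - q) / (1 - q ^ 2))) (fun n => ?_) r
  simp only [Complex.norm_real, Real.norm_eq_abs]
  exact abs_qRatio_mul_div_le hq0 hq1 hα le_rfl (qCoeffA q α n)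

theorem summable_norm_qCoeffB_mul_pow (r : ℝ) :
    Summable fun n => ‖(qCoeffB q α n : ℂ)‖ * r ^ n := by
  refine summable_norm_mul_pow_of_norm_succ_le (tendsto_mul_pow_two_mul_atTop_nhds_zero hq0.le hq1
    (q ^ (2 - α) / (q ^ (-α) - q) / (1 - q ^ 2))) (fun n => ?_) r
  have hrec : qCoeffB q α (n + 1) = qRatio q α (n + 1) * qCoeffB q α n / (1 - q ^ (2 * n + 2)) := by
    rw [mul_div_assoc]; rfl
  simpa only [Complex.norm_real, Real.norm_eq_abs, hrec] using
    abs_qRatio_mul_div_le hq0 hq1 hα n.le_succ (qCoeffB q α n)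

theorem qSeriesA_sub_qSeriesA (x : ℂ) :
    qSeriesA q α x - qSeriesA q α ((q : ℂ) ^ 2 * x) = x * qSeriesB q α x := by
  have hA := summable_mul_pow_of_summable_norm (summable_norm_qCoeffA_mul_pow hq0 hq1 hα)
  have hB := summable_mul_pow_of_summable_norm (summable_norm_qCoeffB_mul_pow hq0 hq1 hα)
  rw [qSeriesA, qSeriesA, qSeriesB, ← (hA x).tsum_sub (hA _), ((hA x).sub (hA _)).tsum_eq_zero_add,
    ← tsum_mul_left]
  simp only [pow_zero, mul_one, sub_self, zero_add]
  refine tsum_congr fun n => ?_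
  have h : ((1 - q ^ (2 * n + 2) : ℝ) : ℂ) * qCoeffA q α (n + 1) = qCoeffB q α n := by
    exact_mod_cast one_sub_pow_mul_qCoeffA_succ hq0 hq1 n
  push_cast at h
  linear_combination x ^ (n + 1) * h

theorem mul_qSeriesB_sub_qSeriesB (x : ℂ) :
    q * qSeriesB q α ((q : ℂ) ^ 2 * x) - ((q ^ (-α) : ℝ) : ℂ) * qSeriesB q α x =
      ((q ^ (2 - α) : ℝ) : ℂ) * qSeriesA q α ((q : ℂ) ^ 2 * x) := by
  have hA := summable_mul_pow_of_summable_norm (summable_norm_qCoeffA_mul_pow hq0 hq1 hα)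
  have hB := summable_mul_pow_of_summable_norm (summable_norm_qCoeffB_mul_pow hq0 hq1 hα)
  rw [qSeriesA, qSeriesB, qSeriesB, ← tsum_mul_left, ← tsum_mul_left, ← tsum_mul_left,
    ← ((hB _).mul_left _).tsum_sub ((hB x).mul_left _)]
  refine tsum_congr fun n => ?_
  have h : ((q : ℂ) ^ (2 * n + 1) - ((q ^ (-α) : ℝ) : ℂ)) * qCoeffB q α n =
      ((q ^ (2 - α) : ℝ) : ℂ) * (q : ℂ) ^ (2 * n) * qCoeffA q α n := by
    exact_mod_cast pow_sub_mul_qCoeffB hq0 hq1 hα n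
  linear_combination x ^ n * h

theorem differentiable_qSeriesA : Differentiable ℂ (qSeriesA q α) :=
  differentiable_tsum_mul_pow (summable_norm_qCoeffA_mul_pow hq0 hq1 hα)

theorem differentiable_qSeriesB : Differentiable ℂ (qSeriesB q α) :=
  differentiable_tsum_mul_pow (summable_norm_qCoeffB_mul_pow hq0 hq1 hα)

theorem isQDiffSolution_qSeries :
    IsQDiffSolution q α (fun t => qSeriesA q α (t ^ 2)) (fun t => t * qSeriesB q α (t ^ 2)) := by
  intro t
  have h1 := qSeriesA_sub_qSeriesA hq0 hq1 hα (t ^ 2)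
  have h2 := mul_qSeriesB_sub_qSeriesB hq0 hq1 hα (t ^ 2)
  simp only [mul_pow]
  constructor
  · linear_combination -h1
  · linear_combination t * h2 - t * ((q ^ (2 - α) : ℝ) : ℂ) * h1

end Series

/-- existence and uniqueness of the entire power-series solution
`S_A = [u, v]^T` of `S_A(qt) = [[1, -t],[t q^{2-α}, q^{-α} - t² q^{2-α}]] S_A(t)`
with `u` even, `v` odd, `u(0) = 1`. -/
theorem statement11 (q α : ℝ) (hq0 : 0 < q) (hq1 : q < 1) (hα : -1 < α) :
    ∃! p : (ℂ → ℂ) × (ℂ → ℂ),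
      Differentiable ℂ p.1 ∧ Differentiable ℂ p.2 ∧
      (∀ t : ℂ, p.1 (-t) = p.1 t) ∧ (∀ t : ℂ, p.2 (-t) = -p.2 t) ∧ p.1 0 = 1 ∧
      ∀ t : ℂ,
        p.1 ((q : ℂ) * t) = p.1 t - t * p.2 t ∧
        p.2 ((q : ℂ) * t) =
          t * ((q ^ (2 - α) : ℝ) : ℂ) * p.1 t +
            (((q ^ (-α) : ℝ) : ℂ) - t ^ 2 * ((q ^ (2 - α) : ℝ) : ℂ)) * p.2 t := by
  have hu : Differentiable ℂ fun t : ℂ => qSeriesA q α (t ^ 2) :=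
    (differentiable_qSeriesA hq0 hq1 hα).comp (differentiable_pow 2)
  have hv : Differentiable ℂ fun t : ℂ => t * qSeriesB q α (t ^ 2) :=
    differentiable_id.mul ((differentiable_qSeriesB hq0 hq1 hα).comp (differentiable_pow 2))
  have hsol := isQDiffSolution_qSeries hq0 hq1 hα
  refine ⟨(fun t => qSeriesA q α (t ^ 2), fun t => t * qSeriesB q α (t ^ 2)),
    ⟨hu, hv, fun t => by dsimp only; rw [neg_sq], fun t => by dsimp only; rw [neg_sq, neg_mul],
    by dsimp only; rw [zero_pow two_ne_zero, qSeriesA_zero], hsol⟩, ?_⟩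
  rintro ⟨u', v'⟩ ⟨hu', hv', -, hodd' : Function.Odd v', hu'0 : u' 0 = 1,
    hsol' : IsQDiffSolution q α u' v'⟩
  have hzero := (hsol'.sub hsol).eq_zero hq0 hq1 hα (hu'.sub hu).differentiableAt
    (hv'.sub hv).differentiableAt (by simp [hu'0, qSeriesA_zero])
    (by simp [hodd'.map_zero])
  simp only [Pi.sub_apply, sub_eq_zero] at hzero
  exact Prod.ext (funext fun t => (hzero t).1) (funext fun t => (hzero t).2)
end

section
/- There exists a unique pair of complex sequences (c_j)_{j≥0}, (d_l)_{l≥0} with d_0 = 1 such that the Laurent series u(t) = Σ_{j=0}^∞ c_j t^{−(2j+1)} and v(t) = Σ_{l=0}^∞ d_l t^{−2l} converge absolutely for every t ∈ ℂ ∖ {0} and satisfy, for all t ≠ 0: u(qt) = (−1/(q² t²)) (q^α u(t) − t q^α v(t)) and v(qt) = (−1/(q² t²)) (t q² u(t) + (1 − t² q²) v(t)). Moreover c_0 ≠ 0. (This is the solution S_C = [u, v]^T at infinity of the q-difference system S_C(qt) = (−1/(q²t²)) [[q^α, −t q^α],[t q², 1 − t² q²]] S_C(t).) -/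
/-
Substitute `w = t⁻²` and write `u(t) = t⁻¹ U(w)`, `v(t) = V(w)` with power series `U = Σ c_j w^j`,
`V = Σ d_l w^l`. The q-difference system becomes
`U(w/q²) = (q^α/q) (V(w) - w U(w))` and `V(w/q²) = V(w) - w U(w) - (w/q²) V(w)`,
and for entire `U`, `V` it holds for all `w ≠ 0` iff it holds coefficientwise (identity theorem).
The coefficients of `w⁰` force `c₀ = q^α/q · d₀`; those of `w^(n+1)` form a triangular linear
system for `(c_{n+1}, d_{n+1})` in terms of `(c_n, d_n)`, uniquely solvable since `q^(2n+2) ≠ 1`.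
The resulting recursion shrinks the coefficients by a factor `O(q^(2n))` at step `n`, so they
decay superexponentially and `U`, `V` are indeed entire.
-/

/-- The defining property of the solution at infinity `S_C = [u, v]^T`:
`p = (c, d)` are the coefficient sequences of the Laurent series
`u(t) = Σ_j c_j t^{-(2j+1)}`, `v(t) = Σ_l d_l t^{-2l}` with `d_0 = 1`, the series
converge absolutely for every `t ≠ 0`, and they satisfy
`S_C(qt) = (-1/(q²t²)) [[q^α, -t q^α],[t q², 1 - t² q²]] S_C(t)`. -/
def SCProp (q α : ℝ) (p : (ℕ → ℂ) × (ℕ → ℂ)) : Prop :=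
  p.2 0 = 1 ∧
  (∀ t : ℂ, t ≠ 0 →
    Summable (fun j : ℕ => ‖p.1 j * t ^ (-(2 * (j : ℤ) + 1))‖) ∧
    Summable (fun l : ℕ => ‖p.2 l * t ^ (-(2 * (l : ℤ)))‖)) ∧
  (∀ t : ℂ, t ≠ 0 →
    (∑' j : ℕ, p.1 j * ((q : ℂ) * t) ^ (-(2 * (j : ℤ) + 1))) =
      (-1 / ((q : ℂ) ^ 2 * t ^ 2)) *
        (((q ^ α : ℝ) : ℂ) * (∑' j : ℕ, p.1 j * t ^ (-(2 * (j : ℤ) + 1))) -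
          t * ((q ^ α : ℝ) : ℂ) * (∑' l : ℕ, p.2 l * t ^ (-(2 * (l : ℤ))))) ∧
    (∑' l : ℕ, p.2 l * ((q : ℂ) * t) ^ (-(2 * (l : ℤ)))) =
      (-1 / ((q : ℂ) ^ 2 * t ^ 2)) *
        (t * (q : ℂ) ^ 2 * (∑' j : ℕ, p.1 j * t ^ (-(2 * (j : ℤ) + 1))) +
          (1 - t ^ 2 * (q : ℂ) ^ 2) * (∑' l : ℕ, p.2 l * t ^ (-(2 * (l : ℤ))))))

open Filter Topology PowerSeries

theorem zpow_neg_two_mul_add_one {K : Type*} [DivisionRing K] (t : K) (j : ℕ) :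
    t ^ (-(2 * (j : ℤ) + 1)) = t⁻¹ * (t⁻¹ ^ 2) ^ j := by
  rw [zpow_neg, ← inv_zpow, ← pow_mul, ← pow_succ']
  norm_cast

theorem zpow_neg_two_mul {K : Type*} [DivisionRing K] (t : K) (l : ℕ) :
    t ^ (-(2 * (l : ℤ))) = (t⁻¹ ^ 2) ^ l := by
  rw [zpow_neg, ← inv_zpow, ← pow_mul]
  norm_cast

theorem Complex.forall_inv_sq_iff {P : ℂ → Prop} :
    (∀ t : ℂ, t ≠ 0 → P (t⁻¹ ^ 2)) ↔ ∀ w : ℂ, w ≠ 0 → P w := by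
  refine ⟨fun h w hw => ?_, fun h t ht => h _ (by simpa using ht)⟩
  obtain ⟨s, rfl⟩ := IsAlgClosed.exists_pow_nat_eq w two_pos
  simpa using h s⁻¹ (by simpa using hw)

theorem summable_mul_pow_of_le_mul_pow {a : ℕ → ℝ} {K ρ : ℝ} (ha : ∀ n, 0 ≤ a n) (hρ0 : 0 ≤ ρ)
    (hρ1 : ρ < 1) (h : ∀ n, a (n + 1) ≤ K * ρ ^ n * a n) (r : ℝ) :
    Summable fun n => a n * r ^ n := by
  have hlim : Tendsto (fun n => K * |r| * ρ ^ n) atTop (𝓝 0) := by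
    simpa using (tendsto_pow_atTop_nhds_zero_of_lt_one hρ0 hρ1).const_mul (K * |r|)
  refine summable_of_ratio_norm_eventually_le (r := 1 / 2) (by norm_num) ?_
  filter_upwards [hlim.eventually_le_const (by norm_num : (0 : ℝ) < 1 / 2)] with n hn
  simp only [norm_mul, norm_pow, Real.norm_eq_abs, abs_of_nonneg (ha _)]
  calc a (n + 1) * |r| ^ (n + 1) ≤ K * ρ ^ n * a n * |r| ^ (n + 1) := by gcongr; exact h n
    _ = K * |r| * ρ ^ n * (a n * |r| ^ n) := by ring
    _ ≤ 1 / 2 * (a n * |r| ^ n) := mul_le_mul_of_nonneg_right hn (by positivity [ha n])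

namespace PowerSeries

def IsEntire (f : ℂ⟦X⟧) : Prop := ∀ w : ℂ, Summable fun n => ‖coeff n f * w ^ n‖

noncomputable def tsumEval (f : ℂ⟦X⟧) (w : ℂ) : ℂ := ∑' n, coeff n f * w ^ n

namespace IsEntire

variable {f g : ℂ⟦X⟧}

theorem summable (hf : f.IsEntire) (w : ℂ) : Summable fun n => coeff n f * w ^ n :=
  (hf w).of_norm

theorem sub (hf : f.IsEntire) (hg : g.IsEntire) : (f - g).IsEntire := fun w =>
  ((hf w).add (hg w)).of_nonneg_of_le (fun _ => norm_nonneg _) fun n => by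
    simpa [sub_mul] using norm_sub_le (coeff n f * w ^ n) (coeff n g * w ^ n)

theorem C_mul (hf : f.IsEntire) (a : ℂ) : (C a * f).IsEntire := fun w =>
  ((hf w).mul_left ‖a‖).congr fun n => by simp [mul_assoc]

theorem X_mul (hf : f.IsEntire) : (X * f).IsEntire := fun w => by
  rw [← summable_nat_add_iff 1]
  exact ((hf w).mul_left ‖w‖).congr fun n => by simp [pow_succ]; ring

theorem rescale (hf : f.IsEntire) (a : ℂ) : (rescale a f).IsEntire := fun w =>
  (hf (a * w)).congr fun n => by simp [mul_pow]; ring_nf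

theorem of_norm_coeff_le {b : ℕ → ℝ}
    (hb : ∀ r : ℝ, Summable fun n => b n * r ^ n) (h : ∀ n, ‖coeff n f‖ ≤ b n) : f.IsEntire :=
  fun w => (hb ‖w‖).of_nonneg_of_le (fun _ => norm_nonneg _) fun n => by
    rw [norm_mul, norm_pow]
    gcongr
    exact h n

end IsEntire

theorem tsumEval_sub {f g : ℂ⟦X⟧} (hf : f.IsEntire) (hg : g.IsEntire) (w : ℂ) :
    (f - g).tsumEval w = f.tsumEval w - g.tsumEval w := by
  simp only [tsumEval, map_sub, sub_mul]
  exact (hf.summable w).tsum_sub (hg.summable w)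

theorem tsumEval_C_mul (f : ℂ⟦X⟧) (a w : ℂ) : (C a * f).tsumEval w = a * f.tsumEval w := by
  simp only [tsumEval, coeff_C_mul, mul_assoc, tsum_mul_left]

theorem tsumEval_X_mul {f : ℂ⟦X⟧} (hf : f.IsEntire) (w : ℂ) :
    (X * f).tsumEval w = w * f.tsumEval w := by
  rw [tsumEval, (hf.X_mul.summable w).tsum_eq_zero_add, tsumEval, ← tsum_mul_left]
  simp only [coeff_zero_X_mul, zero_mul, zero_add, coeff_succ_X_mul]
  exact tsum_congr fun n => by ring

theorem tsumEval_rescale (f : ℂ⟦X⟧) (a w : ℂ) :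
    (rescale a f).tsumEval w = f.tsumEval (a * w) :=
  tsum_congr fun n => by rw [coeff_rescale, mul_pow]; ring

theorem eq_zero_of_tsumEval_eq_zero {f : ℂ⟦X⟧} (hf : f.IsEntire)
    (h : ∀ w : ℂ, w ≠ 0 → f.tsumEval w = 0) : f = 0 := by
  set p := FormalMultilinearSeries.ofScalars ℂ fun n => coeff n f
  have hp : p.radius = ⊤ := p.radius_eq_top_of_summable_norm fun r =>
    (hf r).congr fun n => by simp [p]
  have hsum : HasFPowerSeriesAt p.sum p 0 :=
    (p.hasFPowerSeriesOnBall (hp ▸ ENNReal.zero_lt_top)).hasFPowerSeriesAt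
  have : p = 0 := by
    by_contra hne
    obtain ⟨w, hw, hw0⟩ := ((hsum.locally_ne_zero hne).and self_mem_nhdsWithin).exists
    have hw' : ∑' n, w ^ n * coeff n f = 0 := (tsum_congr fun n => mul_comm _ _).trans (h w hw0)
    exact hw (by simpa [p, FormalMultilinearSeries.sum] using hw')
  ext n
  simpa [p] using congrFun this n

theorem eq_iff_forall_tsumEval_eq {f g : ℂ⟦X⟧} (hf : f.IsEntire) (hg : g.IsEntire) :
    f = g ↔ ∀ w : ℂ, w ≠ 0 → f.tsumEval w = g.tsumEval w := by
  refine ⟨by rintro rfl _ _; rfl, fun h => sub_eq_zero.1 ?_⟩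
  exact eq_zero_of_tsumEval_eq_zero (hf.sub hg) fun w hw => by
    rw [tsumEval_sub hf hg, h w hw, sub_self]

theorem isEntire_iff_forall_ne_zero {f : ℂ⟦X⟧} :
    f.IsEntire ↔ ∀ w : ℂ, w ≠ 0 → Summable fun n => ‖coeff n f * w ^ n‖ := by
  refine ⟨fun hf w _ => hf w, fun hf w => ?_⟩
  rcases eq_or_ne w 0 with rfl | hw
  · exact summable_of_ne_finset_zero (s := {0}) fun n hn => by simp_all
  · exact hf w hw

theorem isEntire_mk_iff_summable_odd (a : ℕ → ℂ) :
    (mk a).IsEntire ↔ ∀ t : ℂ, t ≠ 0 → Summable fun j => ‖a j * t ^ (-(2 * (j : ℤ) + 1))‖ := by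
  rw [isEntire_iff_forall_ne_zero, ← Complex.forall_inv_sq_iff]
  refine forall₂_congr fun t ht => ?_
  rw [← summable_mul_left_iff (norm_ne_zero_iff.2 (inv_ne_zero ht))]
  simp only [coeff_mk, zpow_neg_two_mul_add_one, norm_mul]
  exact summable_congr fun j => by ring

theorem isEntire_mk_iff_summable_even (a : ℕ → ℂ) :
    (mk a).IsEntire ↔ ∀ t : ℂ, t ≠ 0 → Summable fun l => ‖a l * t ^ (-(2 * (l : ℤ)))‖ := by
  rw [isEntire_iff_forall_ne_zero, ← Complex.forall_inv_sq_iff]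
  simp only [coeff_mk, zpow_neg_two_mul]

theorem tsum_mul_zpow_odd (a : ℕ → ℂ) (t : ℂ) :
    ∑' j, a j * t ^ (-(2 * (j : ℤ) + 1)) = t⁻¹ * (mk a).tsumEval (t⁻¹ ^ 2) := by
  simp only [tsumEval, coeff_mk, zpow_neg_two_mul_add_one, ← tsum_mul_left]
  exact tsum_congr fun j => by ring

theorem tsum_mul_zpow_even (a : ℕ → ℂ) (t : ℂ) :
    ∑' l, a l * t ^ (-(2 * (l : ℤ))) = (mk a).tsumEval (t⁻¹ ^ 2) := by
  simp only [tsumEval, coeff_mk, zpow_neg_two_mul]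

end PowerSeries

def IsFormalSolution (q α : ℝ) (U V : ℂ⟦X⟧) : Prop :=
  rescale ((q : ℂ)⁻¹ ^ 2) U = C (((q ^ α : ℝ) : ℂ) / q) * (V - X * U) ∧
  rescale ((q : ℂ)⁻¹ ^ 2) V = V - X * U - C ((q : ℂ)⁻¹ ^ 2) * (X * V)

noncomputable def coeffStep (q α : ℝ) (n : ℕ) (p : ℂ × ℂ) : ℂ × ℂ :=
  let d := -((q : ℂ) ^ (2 * n) * ((q : ℂ) ^ 2 * p.1 + p.2)) / (1 - (q : ℂ) ^ (2 * n + 2))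
  (((q ^ α : ℝ) : ℂ) * (q : ℂ) ^ (2 * n + 1) * (d - p.1), d)

noncomputable def solCoeff (q α : ℝ) : ℕ → ℂ × ℂ
  | 0 => (((q ^ α : ℝ) : ℂ) / q, 1)
  | n + 1 => coeffStep q α n (solCoeff q α n)

section Recursion

variable {q α : ℝ}

theorem forall_laurent_eqs_iff_isFormalSolution (hq : q ≠ 0) {c d : ℕ → ℂ}
    (hc : (mk c).IsEntire) (hd : (mk d).IsEntire) :
    (∀ t : ℂ, t ≠ 0 →
      (∑' j : ℕ, c j * ((q : ℂ) * t) ^ (-(2 * (j : ℤ) + 1))) =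
        (-1 / ((q : ℂ) ^ 2 * t ^ 2)) *
          (((q ^ α : ℝ) : ℂ) * (∑' j : ℕ, c j * t ^ (-(2 * (j : ℤ) + 1))) -
            t * ((q ^ α : ℝ) : ℂ) * (∑' l : ℕ, d l * t ^ (-(2 * (l : ℤ))))) ∧
      (∑' l : ℕ, d l * ((q : ℂ) * t) ^ (-(2 * (l : ℤ)))) =
        (-1 / ((q : ℂ) ^ 2 * t ^ 2)) *
          (t * (q : ℂ) ^ 2 * (∑' j : ℕ, c j * t ^ (-(2 * (j : ℤ) + 1))) +
            (1 - t ^ 2 * (q : ℂ) ^ 2) * (∑' l : ℕ, d l * t ^ (-(2 * (l : ℤ)))))) ↔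
    IsFormalSolution q α (mk c) (mk d) := by
  have hq' : (q : ℂ) ≠ 0 := by exact_mod_cast hq
  rw [IsFormalSolution, eq_iff_forall_tsumEval_eq (hc.rescale _) ((hd.sub hc.X_mul).C_mul _),
    eq_iff_forall_tsumEval_eq (hd.rescale _) ((hd.sub hc.X_mul).sub (hd.X_mul.C_mul _)),
    ← forall₂_and]
  refine Iff.trans ?_ Complex.forall_inv_sq_iff
  refine forall₂_congr fun t ht => and_congr ?_ ?_
  all_goals
    simp only [tsum_mul_zpow_odd, tsum_mul_zpow_even, tsumEval_rescale, tsumEval_C_mul,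
      tsumEval_sub hd hc.X_mul, tsumEval_sub (hd.sub hc.X_mul) (hd.X_mul.C_mul _),
      tsumEval_X_mul hc, tsumEval_X_mul hd, mul_inv, mul_pow]
    field_simp
    constructor <;> intro h <;> linear_combination h

theorem scProp_iff (hq : q ≠ 0) (c d : ℕ → ℂ) :
    SCProp q α (c, d) ↔
      d 0 = 1 ∧ (mk c).IsEntire ∧ (mk d).IsEntire ∧ IsFormalSolution q α (mk c) (mk d) := by
  rw [SCProp, forall₂_and, ← isEntire_mk_iff_summable_odd, ← isEntire_mk_iff_summable_even,
    ← and_assoc (a := (mk c).IsEntire)]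
  exact and_congr_right' <| and_congr_right fun ⟨hc, hd⟩ =>
    forall_laurent_eqs_iff_isFormalSolution hq hc hd

theorem isFormalSolution_mk_iff (hq0 : 0 < q) (hq1 : q < 1) (c d : ℕ → ℂ) :
    IsFormalSolution q α (mk c) (mk d) ↔
      c 0 = ((q ^ α : ℝ) : ℂ) / q * d 0 ∧
        ∀ n, (c (n + 1), d (n + 1)) = coeffStep q α n (c n, d n) := by
  simp only [IsFormalSolution, PowerSeries.ext_iff, ← forall_and]
  rw [← Nat.and_forall_add_one]
  refine and_congr ?_ (forall_congr' fun n => ?_)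
  · simp
  · simp only [coeff_rescale, coeff_C_mul, map_sub, coeff_succ_X_mul, coeff_mk, coeffStep,
      Prod.mk.injEq]
    have hq : (q : ℂ) ≠ 0 := by exact_mod_cast hq0.ne'
    have hk : 1 - (q : ℂ) ^ (2 * n + 2) ≠ 0 := by
      exact_mod_cast (sub_pos.2 (pow_lt_one₀ hq0.le hq1 (by omega))).ne'
    simp only [← pow_mul, inv_pow]
    generalize c (n + 1) = x, d (n + 1) = y
    constructor
    · rintro ⟨h1, h2⟩
      field_simp at h1 h2
      have hy :
          y = -((q : ℂ) ^ (2 * n) * ((q : ℂ) ^ 2 * c n + d n)) / (1 - (q : ℂ) ^ (2 * n + 2)) := by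
        field_simp
        apply mul_left_cancel₀ (pow_ne_zero 2 hq)
        linear_combination h2
      refine ⟨?_, hy⟩
      rw [← hy]
      apply mul_right_cancel₀ hq
      linear_combination h1
    · rintro ⟨rfl, rfl⟩
      constructor <;> field_simp <;> ring

theorem norm_coeffStep_le (hq0 : 0 < q) (hq1 : q < 1) (n : ℕ) (p : ℂ × ℂ) :
    ‖coeffStep q α n p‖ ≤ (q ^ α + 1) * (2 / (1 - q ^ 2) + 1) * (q ^ 2) ^ n * ‖p‖ := by
  have hq2 : 0 < 1 - q ^ 2 := by nlinarith
  have hA : 0 < q ^ α := Real.rpow_pos_of_pos hq0 α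
  have hqn : (q ^ 2) ^ n ≤ 1 := pow_le_one₀ (by positivity) (by nlinarith)
  have hnorm : ∀ m : ℕ, ‖(q : ℂ) ^ m‖ = q ^ m := fun m => by simp [abs_of_pos hq0]
  have hp1 : ‖p.1‖ ≤ ‖p‖ := norm_fst_le p
  have hp2 : ‖p.2‖ ≤ ‖p‖ := norm_snd_le p
  set B := 2 / (1 - q ^ 2) with hB
  have hB0 : 0 ≤ B := by positivity
  have hd : ‖(coeffStep q α n p).2‖ ≤ B * (q ^ 2) ^ n * ‖p‖ := by
    have hden : 1 - q ^ 2 ≤ ‖1 - (q : ℂ) ^ (2 * n + 2)‖ := by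
      have := pow_le_pow_of_le_one hq0.le hq1.le (show 2 ≤ 2 * n + 2 by omega)
      have := norm_sub_norm_le (1 : ℂ) ((q : ℂ) ^ (2 * n + 2))
      rw [norm_one, hnorm] at this
      linarith
    have hnum : ‖(q : ℂ) ^ 2 * p.1 + p.2‖ ≤ 2 * ‖p‖ := by
      have := norm_add_le ((q : ℂ) ^ 2 * p.1) p.2
      rw [norm_mul, hnorm] at this
      nlinarith [norm_nonneg p.1]
    simp only [coeffStep, norm_div, norm_neg, norm_mul, hnorm, ← pow_mul]
    rw [div_le_iff₀ (hq2.trans_le hden), hB]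
    calc q ^ (2 * n) * ‖(q : ℂ) ^ 2 * p.1 + p.2‖ ≤ q ^ (2 * n) * (2 * ‖p‖) := by gcongr
      _ = (2 / (1 - q ^ 2) * q ^ (2 * n) * ‖p‖) * (1 - q ^ 2) := by field_simp
      _ ≤ _ := by gcongr
  have hc : ‖(coeffStep q α n p).1‖ ≤ q ^ α * (B + 1) * (q ^ 2) ^ n * ‖p‖ := by
    have hsub : ‖(coeffStep q α n p).2 - p.1‖ ≤ (B + 1) * ‖p‖ := by
      have := norm_sub_le (coeffStep q α n p).2 p.1
      nlinarith [norm_nonneg p, mul_le_mul_of_nonneg_left hqn (mul_nonneg hB0 (norm_nonneg p))]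
    have hpow : q ^ (2 * n + 1) ≤ (q ^ 2) ^ n := by
      rw [← pow_mul]
      exact pow_le_pow_of_le_one hq0.le hq1.le (by omega)
    calc ‖(coeffStep q α n p).1‖ = q ^ α * q ^ (2 * n + 1) * ‖(coeffStep q α n p).2 - p.1‖ := by
          simp only [coeffStep, norm_mul, hnorm, Complex.norm_real, Real.norm_eq_abs, abs_of_pos hA]
      _ ≤ q ^ α * (q ^ 2) ^ n * ((B + 1) * ‖p‖) := by gcongr
      _ = q ^ α * (B + 1) * (q ^ 2) ^ n * ‖p‖ := by ring
  refine norm_prod_le_iff.2 ⟨hc.trans ?_, hd.trans ?_⟩ <;> gcongr ?_ * _ * _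
  · linarith
  · nlinarith

theorem summable_norm_solCoeff_mul_pow (hq0 : 0 < q) (hq1 : q < 1) (r : ℝ) :
    Summable fun n => ‖solCoeff q α n‖ * r ^ n :=
  summable_mul_pow_of_le_mul_pow (fun _ => norm_nonneg _) (sq_nonneg q) (by nlinarith)
    (fun n => norm_coeffStep_le hq0 hq1 n _) r

theorem isEntire_mk_fst_solCoeff (hq0 : 0 < q) (hq1 : q < 1) :
    (mk fun n => (solCoeff q α n).1).IsEntire :=
  .of_norm_coeff_le (summable_norm_solCoeff_mul_pow hq0 hq1) fun n => by
    simpa using norm_fst_le (solCoeff q α n)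

theorem isEntire_mk_snd_solCoeff (hq0 : 0 < q) (hq1 : q < 1) :
    (mk fun n => (solCoeff q α n).2).IsEntire :=
  .of_norm_coeff_le (summable_norm_solCoeff_mul_pow hq0 hq1) fun n => by
    simpa using norm_snd_le (solCoeff q α n)

theorem eq_solCoeff_of_recursion {c d : ℕ → ℂ} (h0 : c 0 = ((q ^ α : ℝ) : ℂ) / q * d 0)
    (hd0 : d 0 = 1) (hs : ∀ n, (c (n + 1), d (n + 1)) = coeffStep q α n (c n, d n)) :
    ∀ n, (c n, d n) = solCoeff q α n
  | 0 => by simp [solCoeff, h0, hd0]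
  | n + 1 => by rw [hs, eq_solCoeff_of_recursion h0 hd0 hs n, solCoeff]

end Recursion

theorem statement13_general (q α : ℝ) (hq0 : 0 < q) (hq1 : q < 1) :
    ∃ p : (ℕ → ℂ) × (ℕ → ℂ), SCProp q α p ∧ p.1 0 ≠ 0 ∧
      ∀ p' : (ℕ → ℂ) × (ℕ → ℂ), SCProp q α p' → p' = p := by
  refine ⟨(fun n => (solCoeff q α n).1, fun n => (solCoeff q α n).2), ?_, ?_, ?_⟩
  · rw [scProp_iff hq0.ne', isFormalSolution_mk_iff hq0 hq1]
    exact ⟨rfl, isEntire_mk_fst_solCoeff hq0 hq1, isEntire_mk_snd_solCoeff hq0 hq1,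
      by simp [solCoeff], fun n => rfl⟩
  · have hqα : ((q ^ α : ℝ) : ℂ) ≠ 0 := by exact_mod_cast (Real.rpow_pos_of_pos hq0 α).ne'
    exact div_ne_zero hqα (by exact_mod_cast hq0.ne')
  · rintro ⟨c, d⟩ h
    obtain ⟨hd0, -, -, hsol⟩ := (scProp_iff hq0.ne' c d).1 h
    obtain ⟨h0, hs⟩ := (isFormalSolution_mk_iff hq0 hq1 c d).1 hsol
    have hcd := eq_solCoeff_of_recursion h0 hd0 hs
    exact Prod.ext (funext fun n => congrArg Prod.fst (hcd n))
      (funext fun n => congrArg Prod.snd (hcd n))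

/-- there is a unique pair of coefficient sequences `(c, d)` with
`d_0 = 1` defining the solution at infinity, and moreover `c_0 ≠ 0`. -/
theorem statement13 (q α : ℝ) (hq0 : 0 < q) (hq1 : q < 1) (hα : -1 < α) :
    ∃ p : (ℕ → ℂ) × (ℕ → ℂ), SCProp q α p ∧ p.1 0 ≠ 0 ∧
      ∀ p' : (ℕ → ℂ) × (ℕ → ℂ), SCProp q α p' → p' = p :=
  statement13_general q α hq0 hq1
end

section
/- Let C be analytic on ℂ ∖ ({0} ∪ {q^k : k ∈ ℤ}) such that at each point q^k (k ∈ ℤ) C has at worst a simple pole (i.e. (z − q^k)·C(z) is bounded near q^k), and suppose C(qz) = C(z) for all z in its domain. Then C extends to an analytic function on ℂ ∖ {0} and is constant. In particular, there is no function on ℂ ∖ {0}, analytic except for genuine simple poles at every point q^k (k ∈ ℤ), that is invariant under z ↦ qz. -/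
/-!
Near `1`, the function `C` has at worst a simple pole, and its residue `r` there vanishes: for
`1 < R < q⁻¹` the only pole of `C z / z` in the closed annulus `q R ≤ ‖z‖ ≤ R` is `1`, so the
integrals of `C z / z` over the two boundary circles differ by `2πi r`, while the substitution
`z ↦ q z` together with `C (q z) = C z` shows that they are equal. Hence `C` extends
holomorphically across `1`, and by invariance across every `q ^ k`, to a function on `ℂ ∖ {0}`
that is still invariant under `z ↦ q z`. Its norm therefore attains its maximum over `ℂ ∖ {0}` on
the compact annulus `q ≤ ‖z‖ ≤ 1`, and the maximum modulus principle makes it constant.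
-/

open Real Complex Metric Set Filter Function Topology

lemma finite_setOf_zpow_mem_Icc {q c d : ℝ} (hq0 : 0 < q) (hq1 : q < 1) (hc : 0 < c) :
    {k : ℤ | q ^ k ∈ Icc c d}.Finite := by
  obtain ⟨N, hN⟩ := exists_pow_lt_of_lt_one hc hq1
  obtain ⟨M, hM⟩ := pow_unbounded_of_one_lt d ((one_lt_inv₀ hq0).2 hq1)
  rw [inv_pow, ← zpow_natCast, ← zpow_neg] at hM
  rw [← zpow_natCast] at hN
  refine (finite_Icc (-(M : ℤ)) N).subset fun k ⟨hck, hkd⟩ => ⟨?_, ?_⟩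
  · exact ((zpow_lt_zpow_iff_right_of_lt_one₀ hq0 hq1).1 (hkd.trans_lt hM)).le
  · exact ((zpow_lt_zpow_iff_right_of_lt_one₀ hq0 hq1).1 (hN.trans_le hck)).le

lemma eq_zero_of_lt_zpow_of_zpow_lt_inv {q : ℝ} (hq0 : 0 < q) (hq1 : q < 1) {k : ℤ}
    (h₁ : q < q ^ k) (h₂ : q ^ k < q⁻¹) : k = 0 := by
  nth_rewrite 1 [← zpow_one q] at h₁
  rw [zpow_lt_zpow_iff_right_of_lt_one₀ hq0 hq1] at h₁
  rw [← zpow_neg_one, zpow_lt_zpow_iff_right_of_lt_one₀ hq0 hq1] at h₂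
  omega

lemma apply_zpow_mul_eq {G α : Type*} [GroupWithZero G] {f : G → α} {a : G} (ha : a ≠ 0)
    (h : ∀ z, f (a * z) = f z) (n : ℤ) (z : G) : f (a ^ n * z) = f z := by
  induction n using Int.induction_on generalizing z with
  | zero => simp
  | succ n ih => rw [add_comm, zpow_one_add₀ ha, mul_assoc, h, ih]
  | pred n ih =>
    rw [← h, ← mul_assoc, ← zpow_one_add₀ ha, show (1 : ℤ) + (-n - 1) = -n by ring, ih]

lemma exists_zpow_mul_mem_annulus {a z : ℂ} (ha0 : a ≠ 0) (ha1 : ‖a‖ < 1) (hz : z ≠ 0) :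
    ∃ n : ℤ, a ^ n * z ∈ closedBall 0 1 \ ball 0 ‖a‖ := by
  have ha : 0 < ‖a‖ := norm_pos_iff.2 ha0
  obtain ⟨n, hn₁, hn₂⟩ := exists_mem_Ico_zpow (norm_pos_iff.2 hz) ((one_lt_inv₀ ha).2 ha1)
  have hpow : 0 < ‖a‖⁻¹ ^ (n + 1) := zpow_pos (inv_pos.2 ha) _
  have hnorm : ‖a ^ (n + 1) * z‖ = ‖z‖ / ‖a‖⁻¹ ^ (n + 1) := by
    rw [norm_mul, norm_zpow, inv_zpow, div_inv_eq_mul, mul_comm]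
  refine ⟨n + 1, ?_, ?_⟩ <;> simp only [mem_closedBall, mem_ball, dist_zero_right, not_lt, hnorm]
  · exact (div_le_one hpow).2 hn₂.le
  · rwa [le_div_iff₀ hpow, zpow_add_one₀ (inv_ne_zero ha.ne'), mul_left_comm,
      mul_inv_cancel₀ ha.ne', mul_one]

theorem exists_eqOn_const_of_mul_invariant {F : Type*} [NormedAddCommGroup F] [NormedSpace ℂ F]
    [StrictConvexSpace ℝ F] {f : ℂ → F} {a : ℂ} (ha0 : a ≠ 0) (ha1 : ‖a‖ < 1)
    (hf : DifferentiableOn ℂ f {0}ᶜ) (hinv : ∀ z, f (a * z) = f z) :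
    ∃ c, EqOn f (const ℂ c) {0}ᶜ := by
  set K := closedBall (0 : ℂ) 1 \ ball 0 ‖a‖
  have hK : K ⊆ {0}ᶜ := fun z hz h0 => hz.2 (by simp [mem_singleton_iff.1 h0, ha0])
  obtain ⟨c, hcK, hc⟩ := ((isCompact_closedBall 0 1).diff isOpen_ball).exists_isMaxOn
    ⟨1, by simp [ha1.le]⟩ (hf.mono hK).continuousOn.norm
  have hmax : IsMaxOn (norm ∘ f) {0}ᶜ c := fun z hz => by
    obtain ⟨n, hn⟩ := exists_zpow_mul_mem_annulus ha0 ha1 hz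
    simpa [apply_zpow_mul_eq ha0 hinv] using hc hn
  have hconn : IsPreconnected ({0}ᶜ : Set ℂ) :=
    (isConnected_compl_singleton_of_one_lt_rank (by simp [rank_real_complex]) 0).isPreconnected
  exact ⟨f c, eqOn_of_isPreconnected_of_isMaxOn_norm hconn isOpen_compl_singleton hf (hK hcK) hmax⟩

lemma circleIntegral_mul_radius {E : Type*} [NormedAddCommGroup E] [NormedSpace ℂ E] (g : ℂ → E)
    (a R : ℝ) : (∮ z in C(0, a * R), g z) = ∮ z in C(0, R), (a : ℂ) • g (a * z) := by
  simp only [circleIntegral, deriv_circleMap, circleMap_zero, smul_smul]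
  congr 1; ext θ; push_cast; ring_nf

lemma circleIntegral_inv_mul_of_mul_invariant {g : ℂ → ℂ} {a R : ℝ} (ha : a ≠ 0) (hR : 0 ≤ R)
    (hg : ∀ z ∈ sphere (0 : ℂ) R, g (a * z) = g z) :
    (∮ z in C(0, a * R), z⁻¹ * g z) = ∮ z in C(0, R), z⁻¹ * g z := by
  rw [circleIntegral_mul_radius]
  refine circleIntegral.integral_congr hR fun z hz => ?_
  simp only [smul_eq_mul, hg z hz, mul_inv, ← mul_assoc]
  rw [mul_inv_cancel₀ (ofReal_ne_zero.2 ha), one_mul]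

lemma circleIntegral_sub_inv_of_notMem_closedBall {c p : ℂ} {r : ℝ} (hr : 0 ≤ r)
    (hp : p ∉ closedBall c r) : (∮ z in C(c, r), (z - p)⁻¹) = 0 :=
  (((differentiableOn_id.sub_const p).inv fun _ hz => sub_ne_zero.2 hz).diffContOnCl_ball
    (U := {p}ᶜ) fun _ hz hzp => hp (hzp ▸ hz)).circleIntegral_eq_zero hr

lemma differentiableOn_update_limUnder_of_tendsto_sub_mul {f : ℂ → ℂ} {s : Set ℂ} {p : ℂ}
    (hs : s ∈ 𝓝 p) (hd : DifferentiableOn ℂ f (s \ {p}))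
    (h0 : Tendsto (fun z => (z - p) * f z) (𝓝[≠] p) (𝓝 0)) :
    DifferentiableOn ℂ (update f p (limUnder (𝓝[≠] p) f)) s := by
  refine differentiableOn_update_limUnder_of_isLittleO hs hd ?_
  have hne : ∀ᶠ z in 𝓝[≠] p, (z - p)⁻¹ = 0 → f z - f p = 0 :=
    eventually_nhdsWithin_of_forall fun z hz h => absurd (inv_eq_zero.1 h) (sub_ne_zero.2 hz)
  have hlin : Tendsto (fun z => (z - p) * f p) (𝓝[≠] p) (𝓝 0) := by
    simpa using
      ((tendsto_nhdsWithin_of_tendsto_nhds (tendsto_id (x := 𝓝 p))).sub_const p).mul_const (f p)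
  refine (Asymptotics.isLittleO_iff_tendsto' hne).2 ?_
  simpa [div_inv_eq_mul, mul_sub, mul_comm] using h0.sub hlin

theorem circleIntegral_sub_circleIntegral_of_tendsto_sub_mul {f : ℂ → ℂ} {c p res : ℂ} {r R : ℝ}
    (hr : 0 < r) (hrp : r < ‖p - c‖) (hpR : ‖p - c‖ < R)
    (hf : DifferentiableOn ℂ f ((closedBall c R \ ball c r) \ {p}))
    (hres : Tendsto (fun z => (z - p) * f z) (𝓝[≠] p) (𝓝 res)) :
    (∮ z in C(c, R), f z) - (∮ z in C(c, r), f z) = 2 * π * I * res := by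
  set A := closedBall c R \ ball c r
  set g : ℂ → ℂ := fun z => f z - res * (z - p)⁻¹
  have hAo : ball c R \ closedBall c r ⊆ A :=
    sdiff_subset_sdiff ball_subset_closedBall ball_subset_closedBall
  have hAn : ∀ z ∈ ball c R \ closedBall c r, A ∈ 𝓝 z := fun z hz =>
    mem_of_superset ((isOpen_ball.sdiff isClosed_closedBall).mem_nhds hz) hAo
  have hpA : p ∈ ball c R \ closedBall c r := by simp [dist_eq_norm, hrp, hpR]
  have hg0 : Tendsto (fun z => (z - p) * g z) (𝓝[≠] p) (𝓝 0) := by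
    have : ∀ᶠ z in 𝓝[≠] p, (z - p) * g z = (z - p) * f z - res :=
      eventually_nhdsWithin_of_forall fun z hz => by
        simp only [g, mul_sub]; field_simp [sub_ne_zero.2 hz]
    simpa using (hres.sub_const res).congr' (this.mono fun z hz => hz.symm)
  have hgd : DifferentiableOn ℂ g (A \ {p}) := fun z hz =>
    (hf z hz).sub
      (((differentiableWithinAt_id.sub_const p).inv (sub_ne_zero.2 hz.2)).const_mul res)
  have hG := differentiableOn_update_limUnder_of_tendsto_sub_mul (hAn p hpA) hgd hg0
  have hsph : ∀ ρ ∈ ({r, R} : Set ℝ), sphere c ρ ⊆ A \ {p} := by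
    rintro ρ hρ z hz
    rw [mem_sphere_iff_norm] at hz
    rcases hρ with rfl | rfl <;>
      refine ⟨⟨?_, ?_⟩, fun hzp => ?_⟩ <;> simp_all [dist_eq_norm, (hrp.trans hpR).le]
  have hsplit : ∀ ρ ∈ ({r, R} : Set ℝ), (∮ z in C(c, ρ), update g p (limUnder (𝓝[≠] p) g) z) =
      (∮ z in C(c, ρ), f z) - res * ∮ z in C(c, ρ), (z - p)⁻¹ := by
    intro ρ hρ
    have hρ0 : 0 ≤ ρ := by rcases hρ with rfl | rfl <;> linarith [norm_nonneg (p - c)]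
    have hinv : ContinuousOn (fun z => (z - p)⁻¹) (sphere c ρ) :=
      (continuousOn_id.sub continuousOn_const).inv₀ fun z hz => sub_ne_zero.2 (hsph ρ hρ hz).2
    rw [circleIntegral.integral_congr hρ0 fun z hz => update_of_ne (hsph ρ hρ hz).2 _ _,
      ← circleIntegral.integral_const_mul]
    exact circleIntegral.integral_sub ((hf.mono (hsph ρ hρ)).continuousOn.circleIntegrable hρ0)
      ((continuousOn_const.mul hinv).circleIntegrable hρ0)
  have hann := circleIntegral_eq_of_differentiable_on_annulus_off_countable hr (hrp.trans hpR).le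
    countable_empty hG.continuousOn fun z hz => hG.differentiableAt (hAn z hz.1)
  rw [hsplit R (by simp), hsplit r (by simp),
    circleIntegral_sub_inv_of_notMem_closedBall hr.le (by simpa [dist_eq_norm] using hrp),
    circleIntegral.integral_sub_inv_of_mem_ball (by simpa [dist_eq_norm] using hpR)] at hann
  linear_combination hann

def qPunctured (q : ℝ) : Set ℂ := {z : ℂ | z ≠ 0 ∧ ∀ k : ℤ, z ≠ (q : ℂ) ^ k}

section
variable {q : ℝ}

lemma norm_ofReal_zpow (hq0 : 0 < q) (k : ℤ) : ‖(q : ℂ) ^ k‖ = q ^ k := by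
  rw [← ofReal_zpow, Complex.norm_of_nonneg (zpow_nonneg hq0.le k)]

lemma one_notMem_qPunctured : (1 : ℂ) ∉ qPunctured q := fun h => h.2 0 (zpow_zero _).symm

lemma isOpen_qPunctured (hq0 : 0 < q) (hq1 : q < 1) : IsOpen (qPunctured q) := by
  refine isOpen_iff_forall_mem_open.2 fun z hz => ?_
  have hr : 0 < ‖z‖ / 2 := half_pos (norm_pos_iff.2 hz.1)
  set F := (fun k : ℤ => (q : ℂ) ^ k) '' {k | q ^ k ∈ Icc (‖z‖ / 2) (2 * ‖z‖)}
  have hF : F.Finite := (finite_setOf_zpow_mem_Icc hq0 hq1 hr).image _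
  refine ⟨ball z (‖z‖ / 2) \ F, fun w ⟨hw, hwF⟩ => ?_, isOpen_ball.sdiff hF.isClosed,
    mem_ball_self hr, fun ⟨k, _, hk⟩ => hz.2 k hk.symm⟩
  rw [mem_ball, dist_eq_norm] at hw
  have h₁ := norm_sub_norm_le z w
  have h₂ := norm_sub_norm_le w z
  rw [norm_sub_rev] at h₁
  refine ⟨fun h => by simp [h] at hw; linarith, fun k hk => hwF ⟨k, ?_, hk.symm⟩⟩
  rw [mem_ofPred_eq, ← norm_ofReal_zpow hq0, ← hk]
  constructor <;> linarith

lemma mem_qPunctured_of_lt_norm (hq0 : 0 < q) (hq1 : q < 1) {z : ℂ} (h₁ : q < ‖z‖)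
    (h₂ : ‖z‖ < q⁻¹) (hz : z ≠ 1) : z ∈ qPunctured q := by
  refine ⟨norm_pos_iff.1 (hq0.trans h₁), fun k hk => hz ?_⟩
  rw [hk, norm_ofReal_zpow hq0] at h₁ h₂
  rw [hk, eq_zero_of_lt_zpow_of_zpow_lt_inv hq0 hq1 h₁ h₂, zpow_zero]

lemma mem_qPunctured_of_mem_annulus (hq0 : 0 < q) (hq1 : q < 1) {R : ℝ} (h1R : 1 < R)
    (hRq : R < q⁻¹) {z : ℂ} (hz : z ∈ closedBall 0 R \ ball 0 (q * R)) (hz1 : z ≠ 1) :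
    z ∈ qPunctured q := by
  simp only [Set.mem_sdiff, mem_closedBall, mem_ball, dist_zero_right, not_lt] at hz
  exact mem_qPunctured_of_lt_norm hq0 hq1 ((lt_mul_right hq0 h1R).trans_le hz.2)
    (hz.1.trans_lt hRq) hz1

lemma eventually_mem_qPunctured (hq0 : 0 < q) (hq1 : q < 1) :
    ∀ᶠ z in 𝓝[≠] (1 : ℂ), z ∈ qPunctured q := by
  have hnorm : ∀ᶠ z in 𝓝 (1 : ℂ), ‖z‖ ∈ Ioo q q⁻¹ :=
    continuous_norm.continuousAt.eventually_mem
      (Ioo_mem_nhds (by simpa using hq1) (by simpa using (one_lt_inv₀ hq0).2 hq1))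
  filter_upwards [nhdsWithin_le_nhds hnorm, self_mem_nhdsWithin] with z hz hz1
  exact mem_qPunctured_of_lt_norm hq0 hq1 hz.1 hz.2 hz1

lemma ofReal_mul_mem_qPunctured_iff (hq0 : 0 < q) {z : ℂ} :
    (q : ℂ) * z ∈ qPunctured q ↔ z ∈ qPunctured q := by
  have hq : (q : ℂ) ≠ 0 := ofReal_ne_zero.2 hq0.ne'
  have hk : ∀ k : ℤ, (q : ℂ) * z = (q : ℂ) ^ (k + 1) ↔ z = (q : ℂ) ^ k := fun k => by
    rw [zpow_add_one₀ hq, mul_comm _ (q : ℂ), mul_right_inj' hq]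
  simp only [qPunctured, mem_ofPred_eq, mul_ne_zero_iff, hq, ne_eq, not_false_eq_true,
    true_and]
  refine and_congr_right fun _ => ⟨fun h k => (hk k).not.1 (h (k + 1)), fun h k => ?_⟩
  simpa using (hk (k - 1)).not.2 (h (k - 1))

end

-- By invariance, the limit of `C` at each `q ^ k` is its limit at `1`.
open Classical in
noncomputable def qExtend (q : ℝ) (C : ℂ → ℂ) : ℂ → ℂ :=
  fun z => if z ∈ qPunctured q then C z else limUnder (𝓝[≠] 1) C

section
variable {q : ℝ} {C : ℂ → ℂ}

lemma qExtend_of_mem {z : ℂ} (hz : z ∈ qPunctured q) : qExtend q C z = C z := if_pos hz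

lemma qExtend_ofReal_mul (hq0 : 0 < q) (hinv : ∀ z ∈ qPunctured q, C (q * z) = C z) (z : ℂ) :
    qExtend q C (q * z) = qExtend q C z := by
  by_cases hz : z ∈ qPunctured q
  · rw [qExtend_of_mem hz, qExtend_of_mem ((ofReal_mul_mem_qPunctured_iff hq0).2 hz), hinv z hz]
  · simp [qExtend, hz, ofReal_mul_mem_qPunctured_iff hq0]

lemma tendsto_sub_one_mul_nhdsNE_one (hq0 : 0 < q) (hq1 : q < 1)
    (hC : DifferentiableOn ℂ C (qPunctured q)) (hinv : ∀ z ∈ qPunctured q, C (q * z) = C z)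
    (hb : IsBoundedUnder (· ≤ ·) (𝓝[≠] 1) fun z => ‖(z - 1) * C z‖) :
    Tendsto (fun z => (z - 1) * C z) (𝓝[≠] 1) (𝓝 0) := by
  have hd : ∀ z ∈ qPunctured q, DifferentiableAt ℂ C z := fun z hz =>
    hC.differentiableAt ((isOpen_qPunctured hq0 hq1).mem_nhds hz)
  have hlim := tendsto_limUnder_of_differentiable_on_punctured_nhds_of_bounded_under
    (f := fun z => (z - 1) * C z)
    ((eventually_mem_qPunctured hq0 hq1).mono fun z hz =>
      (differentiableAt_id.sub_const 1).mul (hd z hz))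
    (by simpa using hb)
  set res := limUnder (𝓝[≠] 1) fun z => (z - 1) * C z
  suffices res = 0 by rwa [this] at hlim
  obtain ⟨R, h1R, hRq⟩ := exists_between ((one_lt_inv₀ hq0).2 hq1)
  have hqR1 : q * R < 1 := by rwa [← lt_inv_mul_iff₀ hq0, mul_one]
  have hA : ∀ z ∈ (closedBall 0 R \ ball 0 (q * R)) \ {1}, z ∈ qPunctured q := fun z hz =>
    mem_qPunctured_of_mem_annulus hq0 hq1 h1R hRq hz.1 hz.2
  have hres : Tendsto (fun z => (z - 1) * (z⁻¹ * C z)) (𝓝[≠] 1) (𝓝 res) := by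
    have hinv1 : Tendsto (fun z : ℂ => z⁻¹) (𝓝[≠] 1) (𝓝 1) := by
      simpa using (continuousAt_inv₀ (one_ne_zero (α := ℂ))).tendsto.mono_left
        (nhdsWithin_le_nhds (s := {1}ᶜ))
    simpa [mul_left_comm] using hinv1.mul hlim
  have key := circleIntegral_sub_circleIntegral_of_tendsto_sub_mul
    (f := fun z => z⁻¹ * C z) (c := 0) (by positivity)
    (by simpa using hqR1) (by simpa using h1R)
    (fun z hz => ((differentiableAt_inv (hA z hz).1).mul (hd z (hA z hz))).differentiableWithinAt)
    hres
  have hscale : (∮ z in C(0, q * R), z⁻¹ * C z) = ∮ z in C(0, R), z⁻¹ * C z := by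
    refine circleIntegral_inv_mul_of_mul_invariant hq0.ne' (by linarith) fun z hz => hinv z ?_
    have hz : ‖z‖ = R := by simpa using hz
    refine mem_qPunctured_of_mem_annulus hq0 hq1 h1R hRq ?_ fun h => by simp [h] at hz; linarith
    simp [hz, hqR1.trans h1R |>.le]
  rw [hscale, sub_self] at key
  simpa [two_pi_I_ne_zero] using key.symm

lemma differentiableAt_qExtend_one (hq0 : 0 < q) (hq1 : q < 1)
    (hC : DifferentiableOn ℂ C (qPunctured q)) (hinv : ∀ z ∈ qPunctured q, C (q * z) = C z)
    (hb : IsBoundedUnder (· ≤ ·) (𝓝[≠] 1) fun z => ‖(z - 1) * C z‖) :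
    DifferentiableAt ℂ (qExtend q C) 1 := by
  have hS : insert 1 (qPunctured q) ∈ 𝓝 (1 : ℂ) :=
    insert_mem_nhds_iff.2 (eventually_mem_qPunctured hq0 hq1)
  have he := differentiableOn_update_limUnder_of_tendsto_sub_mul hS
    (hC.mono fun z hz => hz.1.resolve_left hz.2)
    (tendsto_sub_one_mul_nhdsNE_one hq0 hq1 hC hinv hb)
  refine (he.congr fun z hz => ?_).differentiableAt hS
  rcases hz with rfl | hz
  · simp [qExtend, one_notMem_qPunctured]
  · rw [qExtend_of_mem hz, update_of_ne (ne_of_mem_of_not_mem hz one_notMem_qPunctured)]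

lemma differentiableOn_qExtend (hq0 : 0 < q) (hq1 : q < 1)
    (hC : DifferentiableOn ℂ C (qPunctured q)) (hinv : ∀ z ∈ qPunctured q, C (q * z) = C z)
    (hb : IsBoundedUnder (· ≤ ·) (𝓝[≠] 1) fun z => ‖(z - 1) * C z‖) :
    DifferentiableOn ℂ (qExtend q C) {0}ᶜ := by
  intro z hz
  refine DifferentiableAt.differentiableWithinAt ?_
  by_cases hzS : z ∈ qPunctured q
  · have hS := (isOpen_qPunctured hq0 hq1).mem_nhds hzS
    exact (hC.differentiableAt hS).congr_of_eventuallyEq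
      (eventually_of_mem hS fun w hw => qExtend_of_mem hw)
  obtain ⟨k, rfl⟩ : ∃ k : ℤ, z = (q : ℂ) ^ k := by
    by_contra! h
    exact hzS ⟨hz, h⟩
  have hq : (q : ℂ) ≠ 0 := ofReal_ne_zero.2 hq0.ne'
  have hcomp : qExtend q C = fun w => qExtend q C ((q : ℂ) ^ (-k) * w) :=
    funext fun w => (apply_zpow_mul_eq hq (qExtend_ofReal_mul hq0 hinv) (-k) w).symm
  have h1 : DifferentiableAt ℂ (qExtend q C) ((q : ℂ) ^ (-k) * (q : ℂ) ^ k) := by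
    rw [← zpow_add₀ hq, neg_add_cancel, zpow_zero]
    exact differentiableAt_qExtend_one hq0 hq1 hC hinv hb
  rw [hcomp]
  exact h1.comp ((q : ℂ) ^ k) (differentiableAt_id.const_mul _)

end

/-- a function analytic on `ℂ ∖ ({0} ∪ {q^k : k ∈ ℤ})` with at worst
simple poles at the points `q^k` and invariant under `z ↦ qz` is constant (its
analytic extension to `ℂ ∖ {0}` is a constant). -/
theorem statement15 (q : ℝ) (hq0 : 0 < q) (hq1 : q < 1) (C : ℂ → ℂ)
    (hC : AnalyticOn ℂ C {z : ℂ | z ≠ 0 ∧ ∀ k : ℤ, z ≠ (q : ℂ) ^ k})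
    (hpole : ∀ k : ℤ, ∃ M ε : ℝ, 0 < ε ∧ ∀ z : ℂ,
      (z ≠ 0 ∧ ∀ j : ℤ, z ≠ (q : ℂ) ^ j) → ‖z - (q : ℂ) ^ k‖ < ε →
        ‖(z - (q : ℂ) ^ k) * C z‖ ≤ M)
    (hinv : ∀ z : ℂ, (z ≠ 0 ∧ ∀ k : ℤ, z ≠ (q : ℂ) ^ k) → C ((q : ℂ) * z) = C z) :
    ∃ c₀ : ℂ, ∀ z : ℂ, (z ≠ 0 ∧ ∀ k : ℤ, z ≠ (q : ℂ) ^ k) → C z = c₀ := by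
  have hb : IsBoundedUnder (· ≤ ·) (𝓝[≠] 1) fun z => ‖(z - 1) * C z‖ := by
    obtain ⟨M, ε, hε, hM⟩ := hpole 0
    refine ⟨M, eventually_map.2 ?_⟩
    filter_upwards [eventually_mem_qPunctured hq0 hq1, nhdsWithin_le_nhds (ball_mem_nhds 1 hε)]
      with z hzS hz
    simpa using hM z hzS (by simpa [dist_eq_norm] using hz)
  obtain ⟨c, hc⟩ := exists_eqOn_const_of_mul_invariant (ofReal_ne_zero.2 hq0.ne')
    (by simpa [abs_of_pos hq0]) (differentiableOn_qExtend hq0 hq1 hC.differentiableOn hinv hb)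
    (qExtend_ofReal_mul hq0 hinv)
  exact ⟨c, fun z hz => (qExtend_of_mem hz).symm.trans (hc hz.1)⟩
end

section
/- Let F be analytic on ℂ ∖ {0} and satisfy the q-difference equation F(qz) = z^{-1} F(z) for all z ≠ 0. Then the Laurent coefficients (F_k)_{k∈ℤ} of F (i.e. F(z) = Σ_{k=−∞}^∞ F_k z^k, converging on ℂ ∖ {0}) satisfy F_k = F_0 · q^{k(k−1)/2} for every k ∈ ℤ. Consequently the space of analytic solutions on ℂ ∖ {0} of F(qz) = z^{-1}F(z) is one-dimensional: every solution is a constant multiple of Θ(z) = Σ_{k=−∞}^∞ q^{k(k−1)/2} z^k. -/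
/-!
Comparing Laurent coefficients on the two sides of `F(qz) = z⁻¹ F(z)` gives the recurrence
`F_{k+1} = q^k F_k`, whose solution is `F_k = F_0 q^{k(k-1)/2}`. Comparing coefficients is legitimate
because they are determined by the values on the unit circle: `2π F_n` is the integral of
`F(e^{iθ}) e^{-inθ}`, and the series may be integrated termwise since convergence at `z = 1` makes
`(F_k)` absolutely summable.
-/

open Complex Real

lemma integral_exp_mul_I_zpow (m : ℤ) :
    ∫ θ in (0 : ℝ)..2 * π, exp (θ * I) ^ m = if m = 0 then (2 * π : ℂ) else 0 := by
  split_ifs with hm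
  · simp [hm]
  have hc : (m : ℂ) * I ≠ 0 := by simp [hm]
  have hexp (θ : ℝ) : exp (θ * I) ^ m = exp (m * I * θ) := by
    rw [← exp_int_mul]; ring_nf
  simp_rw [hexp, integral_exp_mul_complex hc]
  push_cast
  rw [show (m : ℂ) * I * (2 * π) = m * (2 * π * I) by ring, exp_int_mul_two_pi_mul_I]
  simp

lemma integral_laurent_coeff {a : ℤ → ℂ} {f : ℂ → ℂ}
    (h : ∀ z : ℂ, ‖z‖ = 1 → HasSum (fun k => a k * z ^ k) (f z)) (n : ℤ) :
    ∫ θ in (0 : ℝ)..2 * π, f (exp (θ * I)) * exp (θ * I) ^ (-n) = 2 * π * a n := by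
  have ha : Summable a := by simpa using (h 1 norm_one).summable
  have hsum := intervalIntegral.hasSum_integral_of_dominated_convergence
    (F := fun k θ => a k * exp (θ * I) ^ k * exp (θ * I) ^ (-n)) (μ := MeasureTheory.volume)
    (a := 0) (b := 2 * π) (f := fun θ => f (exp (θ * I)) * exp (θ * I) ^ (-n))
    (fun k _ => ‖a k‖) (fun k => by fun_prop) (fun k => .of_forall fun θ _ => by simp)
    (.of_forall fun _ _ => ha.norm) intervalIntegrable_const
    (.of_forall fun θ _ => (h _ (norm_exp_ofReal_mul_I θ)).mul_right _)
  have hterm (k : ℤ) : ∫ θ in (0 : ℝ)..2 * π, a k * exp (θ * I) ^ k * exp (θ * I) ^ (-n) =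
      if k = n then 2 * π * a n else 0 := by
    simp_rw [mul_assoc, ← zpow_add₀ (Complex.exp_ne_zero _), intervalIntegral.integral_const_mul,
      integral_exp_mul_I_zpow, ← sub_eq_add_neg, sub_eq_zero]
    split_ifs with hk
    · subst hk; ring
    · ring
  rw [funext hterm] at hsum
  exact hsum.unique (hasSum_ite_eq n _)

lemma laurent_coeff_unique {a b : ℤ → ℂ} {f : ℂ → ℂ}
    (ha : ∀ z : ℂ, ‖z‖ = 1 → HasSum (fun k => a k * z ^ k) (f z))
    (hb : ∀ z : ℂ, ‖z‖ = 1 → HasSum (fun k => b k * z ^ k) (f z)) : a = b := by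
  funext n
  have h2π : (2 * π : ℂ) ≠ 0 := by simp [pi_ne_zero]
  exact mul_left_cancel₀ h2π ((integral_laurent_coeff ha n).symm.trans (integral_laurent_coeff hb n))

lemma laurent_coeff_succ_of_q_difference {q : ℂ} {F : ℂ → ℂ} {c : ℤ → ℂ} (hq : q ≠ 0)
    (heq : ∀ z : ℂ, z ≠ 0 → F (q * z) = z⁻¹ * F z)
    (hF : ∀ z : ℂ, z ≠ 0 → HasSum (fun k => c k * z ^ k) (F z)) (k : ℤ) :
    c (k + 1) = c k * q ^ k := by
  suffices (fun j => c j * q ^ j) = fun j => c (j + 1) from (congrFun this k).symm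
  refine laurent_coeff_unique (f := fun z => z⁻¹ * F z) (fun z hz => ?_) (fun z hz => ?_) <;>
    have hz0 : z ≠ 0 := ne_of_apply_ne norm (by simp [hz])
  · rw [← heq z hz0]
    convert hF (q * z) (mul_ne_zero hq hz0) using 2 with j
    rw [mul_zpow, mul_assoc]
  · have hshift : (fun j => c (j + 1) * z ^ j) =
        (fun j => z⁻¹ * (c j * z ^ j)) ∘ Equiv.addRight (1 : ℤ) := by
      funext j
      simp only [Function.comp_apply, Equiv.coe_addRight, zpow_add_one₀ hz0]
      field_simp
    rw [hshift, Equiv.hasSum_iff]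
    exact (hF z hz0).mul_left _

lemma triangle_exponent_succ (k : ℤ) : (k + 1) * (k + 1 - 1) / 2 = k * (k - 1) / 2 + k := by
  rw [show (k + 1) * (k + 1 - 1) = k * (k - 1) + k * 2 by ring,
    Int.add_mul_ediv_right _ _ two_ne_zero]

lemma eq_mul_zpow_of_succ_eq_mul_zpow {G₀ : Type*} [GroupWithZero G₀] {q : G₀} {c : ℤ → G₀}
    (hq : q ≠ 0) (h : ∀ k, c (k + 1) = c k * q ^ k) (k : ℤ) :
    c k = c 0 * q ^ (k * (k - 1) / 2) := by
  have step (j : ℤ) :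
      c (j + 1) = c 0 * q ^ ((j + 1) * (j + 1 - 1) / 2) ↔ c j = c 0 * q ^ (j * (j - 1) / 2) := by
    rw [h, triangle_exponent_succ, zpow_add₀ hq, ← mul_assoc]
    exact mul_left_inj' (zpow_ne_zero j hq)
  induction k using Int.induction_on with
  | zero => simp
  | succ m ih => exact (step m).2 ih
  | pred m ih => exact (step (-m - 1)).1 (by rwa [sub_add_cancel])

theorem statement17_general (q : ℝ) (hq0 : 0 < q)
    (F : ℂ → ℂ)
    (heq : ∀ z : ℂ, z ≠ 0 → F ((q : ℂ) * z) = z⁻¹ * F z)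
    (Fc : ℤ → ℂ)
    (hFc : ∀ z : ℂ, z ≠ 0 → HasSum (fun k : ℤ => Fc k * z ^ k) (F z)) :
    (∀ k : ℤ, Fc k = Fc 0 * (q : ℂ) ^ (k * (k - 1) / 2)) ∧
    ∀ z : ℂ, z ≠ 0 → F z = Fc 0 * ∑' k : ℤ, (q : ℂ) ^ (k * (k - 1) / 2) * z ^ k := by
  have hq : (q : ℂ) ≠ 0 := ofReal_ne_zero.2 hq0.ne'
  have hcoeff := eq_mul_zpow_of_succ_eq_mul_zpow hq
    (laurent_coeff_succ_of_q_difference hq heq hFc)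
  refine ⟨hcoeff, fun z hz => ?_⟩
  rw [← tsum_mul_left, ← (hFc z hz).tsum_eq]
  exact tsum_congr fun k => by rw [hcoeff k, mul_assoc]

/-- the Laurent coefficients of an analytic solution on `ℂ ∖ {0}` of
`F(qz) = z⁻¹ F(z)` satisfy `F_k = F_0 q^{k(k-1)/2}`; consequently every such
solution is a constant multiple of `Θ(z) = Σ_{k=-∞}^∞ q^{k(k-1)/2} z^k`. -/
theorem statement17 (q : ℝ) (hq0 : 0 < q) (hq1 : q < 1)
    (F : ℂ → ℂ) (hF : AnalyticOn ℂ F {z : ℂ | z ≠ 0})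
    (heq : ∀ z : ℂ, z ≠ 0 → F ((q : ℂ) * z) = z⁻¹ * F z)
    (Fc : ℤ → ℂ)
    (hFc : ∀ z : ℂ, z ≠ 0 → HasSum (fun k : ℤ => Fc k * z ^ k) (F z)) :
    (∀ k : ℤ, Fc k = Fc 0 * (q : ℂ) ^ (k * (k - 1) / 2)) ∧
    ∀ z : ℂ, z ≠ 0 → F z = Fc 0 * ∑' k : ℤ, (q : ℂ) ^ (k * (k - 1) / 2) * z ^ k :=
  statement17_general q hq0 F heq Fc hFc
end
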